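/- arXiv:1411.3877 — 4 statements merged into one kernel-verified Lean document; each statement's English description precedes it below -/
import Mathlib

section
/- For every k ∈ ℤ, every positive integer N and every Dirichlet character χ mod N, the induction map Ind : M_k(Γ₀(N), χ) → M_k(Ind_{Γ₀(N)} χ) is a linear isomorphism; its inverse is given by f ↦ ⟨f, 𝔢_{I₂}⟩. -/
open scoped MatrixGroups Manifold Kronecker ComplexConjugate Classical ComplexOrder
open Matrix UpperHalfPlane Complex Filter MeasureTheory CongruenceSubgroup

noncomputable section

namespace VVMF

abbrev GL2ℤ := Matrix (Fin 2) (Fin 2) ℤ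

/-- The automorphy factor `c τ + d` for `γ ∈ SL(2,ℤ)`. -/
def denomZ (γ : SL(2, ℤ)) (τ : ℍ) : ℂ :=
  ((γ 1 0 : ℤ) : ℂ) * (τ : ℂ) + ((γ 1 1 : ℤ) : ℂ)

/-- `ρ` is a (matrix) representation of `SL(2,ℤ)`. -/
def IsRep {ι : Type*} [Fintype ι] (ρ : SL(2, ℤ) → Matrix ι ι ℂ) : Prop :=
  ρ 1 = 1 ∧ ∀ γ δ : SL(2, ℤ), ρ (γ * δ) = ρ γ * ρ δ

/-- The weight-`k` slash action `f ∣_{k,ρ} γ` on vector-valued functions. -/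
def vslash {ι : Type*} [Fintype ι] (k : ℤ) (ρ : SL(2, ℤ) → Matrix ι ι ℂ)
    (γ : SL(2, ℤ)) (f : ℍ → ι → ℂ) : ℍ → ι → ℂ :=
  fun τ => (denomZ γ τ) ^ (-k) • (ρ γ⁻¹).mulVec (f (γ • τ))

/-- Vector-valued modular form of weight `k` and type `ρ`: holomorphic,
slash-invariant, with all components (equivalently, all functionals) bounded
towards `i∞`. -/
def IsVModForm {ι : Type*} [Fintype ι] (k : ℤ) (ρ : SL(2, ℤ) → Matrix ι ι ℂ)
    (f : ℍ → ι → ℂ) : Prop :=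
  (∀ i, MDifferentiable 𝓘(ℂ) 𝓘(ℂ) (fun τ : ℍ => f τ i)) ∧
  (∀ γ : SL(2, ℤ), vslash k ρ γ f = f) ∧
  (∀ i, IsBoundedAtImInfty (fun τ : ℍ => f τ i))

/-- Vector-valued cusp form. -/
def IsVCuspForm {ι : Type*} [Fintype ι] (k : ℤ) (ρ : SL(2, ℤ) → Matrix ι ι ℂ)
    (f : ℍ → ι → ℂ) : Prop :=
  (∀ i, MDifferentiable 𝓘(ℂ) 𝓘(ℂ) (fun τ : ℍ => f τ i)) ∧
  (∀ γ : SL(2, ℤ), vslash k ρ γ f = f) ∧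
  (∀ i, IsZeroAtImInfty (fun τ : ℍ => f τ i))

/-- The space `M_k(ρ)` of modular forms of weight `k` and type `ρ`. -/
def Mk {ι : Type*} [Fintype ι] (k : ℤ) (ρ : SL(2, ℤ) → Matrix ι ι ℂ) :
    Set (ℍ → ι → ℂ) := {f | IsVModForm k ρ f}

/-- The trivial one-dimensional representation `𝟙` of `SL(2,ℤ)`. -/
def oneRep : SL(2, ℤ) → Matrix Unit Unit ℂ := fun _ => 1

/-- The scalar slash action on ℂ-valued functions. -/
def cslash (k : ℤ) (γ : SL(2, ℤ)) (f : ℍ → ℂ) : ℍ → ℂ :=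
  fun τ => (denomZ γ τ) ^ (-k) * f (γ • τ)

/-- A Dirichlet character mod `N` evaluated on the lower right entry `d(γ)`. -/
def dirSL {N : ℕ} (χ : DirichletCharacter ℂ N) (γ : SL(2, ℤ)) : ℂ :=
  χ (((γ 1 1 : ℤ) : ZMod N))

/-- Classical modular form of weight `k` for `Γ₀(N)` and Dirichlet character `χ`. -/
def IsModFormChi {N : ℕ} (k : ℤ) (χ : DirichletCharacter ℂ N) (f : ℍ → ℂ) : Prop :=
  MDifferentiable 𝓘(ℂ) 𝓘(ℂ) f ∧
  (∀ γ ∈ Gamma0 N, (fun τ => dirSL χ γ⁻¹ * cslash k γ f τ) = f) ∧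
  (∀ γ : SL(2, ℤ), IsBoundedAtImInfty (cslash k γ f))

/-- Classical cusp form of weight `k` for `Γ₀(N)` and Dirichlet character `χ`. -/
def IsCuspFormChi {N : ℕ} (k : ℤ) (χ : DirichletCharacter ℂ N) (f : ℍ → ℂ) : Prop :=
  MDifferentiable 𝓘(ℂ) 𝓘(ℂ) f ∧
  (∀ γ ∈ Gamma0 N, (fun τ => dirSL χ γ⁻¹ * cslash k γ f τ) = f) ∧
  (∀ γ : SL(2, ℤ), IsZeroAtImInfty (cslash k γ f))

/-! ### The sets `Δ_M` and vector-valued Hecke operators -/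

/-- Membership in `Δ_M`: upper triangular, positive diagonal (automatic for `M > 0`),
determinant `M`, and `0 ≤ b < d`. -/
def DeltaPred (M : ℕ) (m : GL2ℤ) : Prop :=
  m 1 0 = 0 ∧ 0 < m 0 0 ∧ m 0 0 * m 1 1 = (M : ℤ) ∧ 0 ≤ m 0 1 ∧ m 0 1 < m 1 1

/-- The set `Δ_M` of upper triangular matrices `(a b; 0 d)`, `a d = M`, `0 ≤ b < d`. -/
def Delta (M : ℕ) : Type := {m : GL2ℤ // DeltaPred M m}

instance (M : ℕ) : Finite (Delta M) := by
  have key : ∀ m : Delta M, m.1 0 0 ≤ (M : ℤ) ∧ m.1 0 1 ≤ (M : ℤ) ∧ m.1 1 1 ≤ (M : ℤ) := by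
    rintro ⟨m, hc, ha, hdet, hb0, hbd⟩
    have hd : 1 ≤ m 1 1 := by nlinarith
    have ha' : 1 ≤ m 0 0 := ha
    refine ⟨?_, ?_, ?_⟩ <;> nlinarith
  refine Finite.of_injective
    (fun m : Delta M => ((⟨(m.1 0 0).toNat, ?_⟩ : Fin (M+1)), (⟨(m.1 0 1).toNat, ?_⟩ : Fin (M+1)),
      (⟨(m.1 1 1).toNat, ?_⟩ : Fin (M+1)))) ?_
  · have := key m; omega
  · have := key m; omega
  · have := key m; omega
  · intro m m' h
    have h1 := congrArg (fun p => (p.1 : Fin (M+1)).val) h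
    have h2 := congrArg (fun p => (p.2.1 : Fin (M+1)).val) h
    have h3 := congrArg (fun p => (p.2.2 : Fin (M+1)).val) h
    simp only at h1 h2 h3
    have e1 : m.1 0 0 = m'.1 0 0 := by
      have p1 := m.2.2.1; have p2 := m'.2.2.1
      omega
    have e2 : m.1 0 1 = m'.1 0 1 := by
      have p1 := m.2.2.2.2.1; have p2 := m'.2.2.2.2.1
      omega
    have e3 : m.1 1 1 = m'.1 1 1 := by
      have p1 := m.2.2.2.2.1; have p2 := m'.2.2.2.2.1
      have q1 := m.2.2.2.2.2; have q2 := m'.2.2.2.2.2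
      omega
    apply Subtype.ext
    ext i j
    fin_cases i <;> fin_cases j
    · exact e1
    · exact e2
    · show m.1 1 0 = m'.1 1 0
      rw [m.2.1, m'.2.1]
    · exact e3

instance (M : ℕ) : Fintype (Delta M) := Fintype.ofFinite _

/-- `HeckeData M bar coc` asserts that for every `m ∈ Δ_M` and `γ ∈ SL(2,ℤ)` we have
`m γ = I_m(γ) · overline{m γ}` with `overline{m γ} = bar m γ ∈ Δ_M` and
`I_m(γ) = coc m γ ∈ SL(2,ℤ)`. -/
def HeckeData (M : ℕ) (bar : Delta M → SL(2, ℤ) → Delta M)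
    (coc : Delta M → SL(2, ℤ) → SL(2, ℤ)) : Prop :=
  ∀ (m : Delta M) (γ : SL(2, ℤ)),
    ((coc m γ : SL(2, ℤ)) : GL2ℤ) * (bar m γ).1 = m.1 * (γ : GL2ℤ)

/-- The representation `T_M ρ` on `V(ρ) ⊗ ℂ[Δ_M]` (coordinates `ι × Δ_M`):
`(T_M ρ)(γ) (v ⊗ 𝔢_m) = ρ(I_m(γ⁻¹)⁻¹) v ⊗ 𝔢_{m·γ⁻¹}`. -/
def heckeRep {ι : Type*} (M : ℕ) (ρ : SL(2, ℤ) → Matrix ι ι ℂ)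
    (bar : Delta M → SL(2, ℤ) → Delta M) (coc : Delta M → SL(2, ℤ) → SL(2, ℤ)) :
    SL(2, ℤ) → Matrix (ι × Delta M) (ι × Delta M) ℂ :=
  fun γ p q => if p.2 = bar q.2 γ⁻¹ then ρ ((coc q.2 γ⁻¹)⁻¹) p.1 q.1 else 0

/-- Möbius action of an upper triangular integer matrix `(a b; 0 d)` (with
`(aτ+b)/d ∈ ℍ`, as is the case for `m ∈ Δ_M`) on `ℍ`. -/
def utAct (m : GL2ℤ) (τ : ℍ) : ℍ :=
  if h : 0 < ((((m 0 0 : ℤ) : ℂ) * (τ : ℂ) + ((m 0 1 : ℤ) : ℂ)) / ((m 1 1 : ℤ) : ℂ)).im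
  then ⟨_, h⟩ else τ

/-- The slash `(f ∣_k m)(τ) = (a/d)^{k/2} f((aτ+b)/d)` for `m = (a b; 0 d)`. -/
def mslash {ι : Type*} (k : ℤ) (m : GL2ℤ) (f : ℍ → ι → ℂ) : ℍ → ι → ℂ :=
  fun τ => (((((m 0 0 : ℤ) : ℝ) / ((m 1 1 : ℤ) : ℝ)) ^ ((k : ℝ) / 2) : ℝ) : ℂ) • f (utAct m τ)

/-- The vector-valued Hecke operator on forms:
`T_M f = ∑_{m ∈ Δ_M} (f ∣_k m) ⊗ 𝔢_m`. -/
def heckeT {ι : Type*} (M : ℕ) (k : ℤ) (f : ℍ → ι → ℂ) : ℍ → (ι × Delta M) → ℂ :=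
  fun τ p => mslash k p.2.1 f τ p.1

/-- Tensor product of vector-valued functions, `(f ⊗ g)(τ) = f(τ) ⊗ g(τ)`. -/
def tensorF {α β : Type*} (f : ℍ → α → ℂ) (g : ℍ → β → ℂ) : ℍ → α × β → ℂ :=
  fun τ p => f τ p.1 * g τ p.2

/-! ### Right cosets and induced representations -/

/-- The set of right cosets `Γ\SL(2,ℤ)`. -/
def Cos (Γ : Subgroup SL(2, ℤ)) : Type := Quotient (QuotientGroup.rightRel Γ)

/-- The coset `Γ γ`. -/
def mkCos (Γ : Subgroup SL(2, ℤ)) (γ : SL(2, ℤ)) : Cos Γ :=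
  Quotient.mk (QuotientGroup.rightRel Γ) γ

/-- Right translation of right cosets: `Γγ ↦ Γγδ`. -/
def cosMul (Γ : Subgroup SL(2, ℤ)) (c : Cos Γ) (δ : SL(2, ℤ)) : Cos Γ :=
  Quotient.map' (· * δ) (by
    intro a b h
    rw [QuotientGroup.rightRel_apply] at h ⊢
    simpa [mul_assoc] using h) c

/-- `IsSection Γ sec` says `sec` picks a representative in each right coset of `Γ`,
with the identity coset represented by `1` (i.e. `1 ∈ B`). -/
def IsSection (Γ : Subgroup SL(2, ℤ)) (sec : Cos Γ → SL(2, ℤ)) : Prop :=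
  (∀ c, mkCos Γ (sec c) = c) ∧ sec (mkCos Γ 1) = 1

/-- The cocycle `I_β(δ) ∈ Γ` of the chosen system of representatives:
`β δ = I_β(δ) · overline{β δ}`, extended to all of `SL(2,ℤ)` by `I_β = I_{overline β}`. -/
def indCoc (Γ : Subgroup SL(2, ℤ)) (sec : Cos Γ → SL(2, ℤ)) (c : Cos Γ)
    (δ : SL(2, ℤ)) : SL(2, ℤ) :=
  sec c * δ * (sec (cosMul Γ c δ))⁻¹

/-- The induced representation `Ind_Γ χ` on `ℂ[Γ\SL(2,ℤ)]`, for a character given as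
a function `χf : SL(2,ℤ) → ℂ` (evaluated only on elements of `Γ`):
`(Ind_Γ χ)(γ) 𝔢_β = χ(I_β(γ⁻¹)⁻¹) 𝔢_{β·γ⁻¹}`. -/
def indRep (Γ : Subgroup SL(2, ℤ)) (sec : Cos Γ → SL(2, ℤ)) (χf : SL(2, ℤ) → ℂ) :
    SL(2, ℤ) → Matrix (Cos Γ) (Cos Γ) ℂ :=
  fun γ c c' => if c = cosMul Γ c' γ⁻¹ then χf ((indCoc Γ sec c' γ⁻¹)⁻¹) else 0

/-- The induced representation `Ind_Γ 𝟙` (a permutation representation). -/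
def permRep (Γ : Subgroup SL(2, ℤ)) : SL(2, ℤ) → Matrix (Cos Γ) (Cos Γ) ℂ :=
  fun γ c c' => if c = cosMul Γ c' γ⁻¹ then 1 else 0

/-- The induction map on modular forms, `Ind f = ∑_γ (f ∣_k γ) 𝔢_γ`. -/
def indForm (Γ : Subgroup SL(2, ℤ)) (sec : Cos Γ → SL(2, ℤ)) (k : ℤ) (f : ℍ → ℂ) :
    ℍ → Cos Γ → ℂ :=
  fun τ c => cslash k (sec c) f τ

/-- The pointwise pairing `⟨f, v⟩ : τ ↦ ⟨f(τ), v⟩` with respect to the scalar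
product making the standard basis orthonormal. -/
def pairF {α : Type*} [Fintype α] (f : ℍ → α → ℂ) (v : α → ℂ) : ℍ → ℂ :=
  fun τ => ∑ a, f τ a * conj (v a)

/-! ### Eisenstein series -/

/-- The matrix `T = (1 1; 0 1)`. -/
def Tmat : SL(2, ℤ) := ⟨!![1, 1; 0, 1], by norm_num [Matrix.det_fin_two_of]⟩

/-- The relation whose classes are the right cosets `Γ_∞(v) γ` of
`Γ_∞(v) = {γ ∈ Γ_∞ : ρ(γ) v = v}`. -/
def eisRel {ι : Type*} [Fintype ι] (ρ : SL(2, ℤ) → Matrix ι ι ℂ) (v : ι → ℂ)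
    (a b : SL(2, ℤ)) : Prop :=
  ((b * a⁻¹ : SL(2, ℤ)) 1 0 : ℤ) = 0 ∧ (ρ (b * a⁻¹)).mulVec v = v

/-- The index `[Γ_∞ : Γ_∞(v)]`. -/
def eisIndex {ι : Type*} [Fintype ι] (ρ : SL(2, ℤ) → Matrix ι ι ℂ) (v : ι → ℂ) : ℕ :=
  Nat.card (Quotient (Relation.EqvGen.setoid
    (fun a b : {g : SL(2, ℤ) // (g 1 0 : ℤ) = 0} => eisRel ρ v a.1 b.1)))

/-- The Eisenstein series
`E_{k,v} = [Γ_∞ : Γ_∞(v)]⁻¹ ∑_{γ ∈ Γ_∞(v)\SL(2,ℤ)} v ∣_{k,ρ} γ` (for `k > 2`). -/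
def eisSeries {ι : Type*} [Fintype ι] (k : ℤ) (ρ : SL(2, ℤ) → Matrix ι ι ℂ)
    (v : ι → ℂ) : ℍ → ι → ℂ :=
  fun τ => ((eisIndex ρ v : ℂ))⁻¹ •
    ∑' c : Quotient (Relation.EqvGen.setoid (eisRel ρ v)),
      vslash k ρ (Quotient.out c) (fun _ => v) τ

/-- The Eisenstein series defined via the Hecke trick,
`E_{k,v} = [Γ_∞ : Γ_∞(v)]⁻¹ lim_{s→0} ∑_{γ ∈ Γ_∞(v)\SL(2,ℤ)} y^s v ∣_{k,ρ} γ`. -/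
def eisSeriesH {ι : Type*} [Fintype ι] (k : ℤ) (ρ : SL(2, ℤ) → Matrix ι ι ℂ)
    (v : ι → ℂ) : ℍ → ι → ℂ :=
  fun τ => limUnder (nhdsWithin (0 : ℝ) (Set.Ioi 0)) (fun s : ℝ =>
    ((eisIndex ρ v : ℂ))⁻¹ •
      ∑' c : Quotient (Relation.EqvGen.setoid (eisRel ρ v)),
        ((((Quotient.out c • τ : ℍ).im) ^ s : ℝ) : ℂ) •
          vslash k ρ (Quotient.out c) (fun _ => v) τ)

/-- The Eisenstein space `E_k(ρ) = span{E_{k,v} : v ∈ V(ρ)}` (for `k > 2`). -/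
def Ek {ι : Type*} [Fintype ι] (k : ℤ) (ρ : SL(2, ℤ) → Matrix ι ι ℂ) :
    Submodule ℂ (ℍ → ι → ℂ) :=
  Submodule.span ℂ {f | ∃ v : ι → ℂ, f = eisSeries k ρ v}

/-- The submodule of `SL(2,ℤ)`-invariant vectors (the isotrivial component `ρ(𝟙)`). -/
def invariants {ι : Type*} [Fintype ι] (ρ : SL(2, ℤ) → Matrix ι ι ℂ) :
    Submodule ℂ (ι → ℂ) where
  carrier := {v | ∀ γ, (ρ γ).mulVec v = v}
  add_mem' := by
    intro a b ha hb γ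
    rw [Matrix.mulVec_add, ha, hb]
  zero_mem' := by
    intro γ
    simp [Matrix.mulVec_zero]
  smul_mem' := by
    intro c a ha γ
    rw [Matrix.mulVec_smul, ha]

/-- The subspace `V(ρ)(1)_T = {v : ρ(T) v = v}` of `T`-fixed vectors. -/
def fixedT {ι : Type*} [Fintype ι] (ρ : SL(2, ℤ) → Matrix ι ι ℂ) :
    Submodule ℂ (ι → ℂ) where
  carrier := {v | (ρ Tmat).mulVec v = v}
  add_mem' := by
    intro a b ha hb
    show (ρ Tmat).mulVec _ = _
    rw [Matrix.mulVec_add, ha, hb]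
  zero_mem' := by
    show (ρ Tmat).mulVec _ = _
    simp [Matrix.mulVec_zero]
  smul_mem' := by
    intro c a ha
    show (ρ Tmat).mulVec _ = _
    rw [Matrix.mulVec_smul, ha]

/-! ### The hyperbolic measure and Petersson scalar products -/

instance : MeasurableSpace ℍ := borel ℍ

/-- The measure `dx dy` on `ℍ` (hyperbolic weights are carried by the integrands). -/
def μH : Measure ℍ := (MeasureTheory.volume : Measure ℂ).comap (fun τ : ℍ => (τ : ℂ))

/-- The standard (closed) fundamental domain of `SL(2,ℤ)\ℍ`. -/
def fdSL : Set ℍ := ModularGroup.fd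

/-- The Petersson scalar product `⟨f, g⟩_ι` of vector-valued forms `f` of type `ρ` and
`g` of type `σ`, with respect to the embedding `ι : 𝟙 ↪ ρ ⊗ σ̄` with `ι(1) = u`:
`∫_{SL(2,ℤ)\ℍ} ⟨(f ⊗ ḡ)(τ), ι(1)⟩ y^{k-2} dx dy`. -/
def petersson {α β : Type*} [Fintype α] [Fintype β] (k : ℤ) (u : α × β → ℂ)
    (f : ℍ → α → ℂ) (g : ℍ → β → ℂ) : ℂ :=
  ∫ τ in fdSL, (∑ a, ∑ b, f τ a * conj (g τ b) * conj (u (a, b))) *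
    ((τ.im : ℂ)) ^ (k - 2) ∂μH

/-- The regularized Petersson scalar product (regularized as the limit of integrals
over truncations of the fundamental domain). -/
def peterssonReg {α β : Type*} [Fintype α] [Fintype β] (k : ℤ) (u : α × β → ℂ)
    (f : ℍ → α → ℂ) (g : ℍ → β → ℂ) : ℂ :=
  limUnder Filter.atTop (fun t : ℝ =>
    ∫ τ in {τ ∈ fdSL | τ.im ≤ t}, (∑ a, ∑ b, f τ a * conj (g τ b) * conj (u (a, b))) *
      ((τ.im : ℂ)) ^ (k - 2) ∂μH)

/-- The canonical `ι(1) = ∑_w w ⊗ w̄` for forms of the same type. -/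
def diagPair (α : Type*) : α × α → ℂ := fun p => if p.1 = p.2 then 1 else 0

/-- A fundamental domain for `Γ\ℍ` obtained from coset representatives. -/
def fdGamma (Γ : Subgroup SL(2, ℤ)) (sec : Cos Γ → SL(2, ℤ)) : Set ℍ :=
  ⋃ c : Cos Γ, (fun τ => sec c • τ) '' fdSL

/-- The normalized Petersson scalar product of two classical modular forms for `Γ`:
`[SL(2,ℤ):Γ]⁻¹ ∫_{Γ\ℍ} f(τ) conj(g(τ)) y^{k-2} dx dy`. -/
def peterssonGamma (k : ℤ) (Γ : Subgroup SL(2, ℤ)) (sec : Cos Γ → SL(2, ℤ))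
    (f g : ℍ → ℂ) : ℂ :=
  ((Γ.index : ℂ))⁻¹ *
    ∫ τ in fdGamma Γ sec, f τ * conj (g τ) * ((τ.im : ℂ)) ^ (k - 2) ∂μH

/-! ### Kernels, finite index, instances -/

/-- The kernel of a representation. -/
def repKer {ι : Type*} [Fintype ι] (ρ : SL(2, ℤ) → Matrix ι ι ℂ) (hρ : IsRep ρ) :
    Subgroup SL(2, ℤ) where
  carrier := {γ | ρ γ = 1}
  one_mem' := hρ.1
  mul_mem' := by
    intro a b ha hb
    show ρ (_ * _) = 1
    rw [hρ.2, ha, hb, one_mul]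
  inv_mem' := by
    intro a ha
    show ρ _⁻¹ = 1
    have h2 := hρ.2 a⁻¹ a
    rw [inv_mul_cancel, hρ.1, ha, mul_one] at h2
    exact h2.symm

instance (Γ : Subgroup SL(2, ℤ)) [Γ.FiniteIndex] : Finite (Cos Γ) :=
  Finite.of_equiv _ (QuotientGroup.quotientRightRelEquivQuotientLeftRel Γ).symm

instance (Γ : Subgroup SL(2, ℤ)) [Γ.FiniteIndex] : Fintype (Cos Γ) := Fintype.ofFinite _

instance (N : ℕ) [NeZero N] : (CongruenceSubgroup.Gamma N).FiniteIndex := by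
  haveI : Finite (Matrix.SpecialLinearGroup (Fin 2) (ZMod N)) := Subtype.finite
  have : (CongruenceSubgroup.Gamma N) = (Matrix.SpecialLinearGroup.map (Int.castRingHom (ZMod N))).ker := rfl
  rw [this]
  infer_instance

instance (N : ℕ) [NeZero N] : (Gamma0 N).FiniteIndex := by
  refine Subgroup.finiteIndex_of_le (H := CongruenceSubgroup.Gamma N) ?_
  intro γ hγ
  rw [Gamma_mem] at hγ
  rw [Gamma0_mem]
  exact hγ.2.2.1

instance (N : ℕ) [NeZero N] : (Gamma1 N).FiniteIndex := by
  refine Subgroup.finiteIndex_of_le (H := CongruenceSubgroup.Gamma N) ?_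
  intro γ hγ
  rw [Gamma_mem] at hγ
  rw [Gamma1_mem]
  exact ⟨hγ.1, hγ.2.2.2, hγ.2.2.1⟩

/-- A sesquilinear scalar product on `ι → ℂ` with Gram matrix `B`:
`⟨v, w⟩_B = ∑_{i,j} conj(w i) B i j v j`. -/
def sesq {ι : Type*} [Fintype ι] (B : Matrix ι ι ℂ) (v w : ι → ℂ) : ℂ :=
  ∑ i, ∑ j, conj (w i) * B i j * v j

/-- The scalar product `⟨v ⊗ 𝔢_m, w ⊗ 𝔢_{m'}⟩ = δ_{m,m'} ⟨v,w⟩_B` on `V(ρ) ⊗ ℂ[Δ_M]`. -/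
def blockDiagGram {ι : Type*} (M : ℕ) (B : Matrix ι ι ℂ) :
    Matrix (ι × Delta M) (ι × Delta M) ℂ :=
  Matrix.of fun p q => if p.2 = q.2 then B p.1 q.1 else 0

/-- The inclusion `𝟙 → T_M 𝟙`, `c ↦ c ∑_{m ∈ Δ_M} 𝔢_m`. -/
def oneIncl (M : ℕ) : Matrix (Unit × Delta M) Unit ℂ :=
  Matrix.of fun _ _ => 1

/-- `T_M φ` for a homomorphism (intertwining matrix) `φ : ρ → σ`:
`v ⊗ 𝔢_m ↦ φ(v) ⊗ 𝔢_m`. -/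
def heckeHom {ι κ : Type*} (M : ℕ) (φ : Matrix κ ι ℂ) :
    Matrix (κ × Delta M) (ι × Delta M) ℂ :=
  fun p q => if p.2 = q.2 then φ p.1 q.1 else 0

/-- The surjection `(T_M ρ) ⊗ (T_M σ) → T_M (ρ ⊗ σ)`:
`(v ⊗ 𝔢_m) ⊗ (w ⊗ 𝔢_{m'}) ↦ δ_{m,m'} (v ⊗ w) ⊗ 𝔢_m`. -/
def heckeTenProj (ι κ : Type*) (M : ℕ) :
    Matrix ((ι × κ) × Delta M) ((ι × Delta M) × (κ × Delta M)) ℂ :=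
  fun p q => if p.1.1 = q.1.1 ∧ p.1.2 = q.2.1 ∧ p.2 = q.1.2 ∧ q.1.2 = q.2.2 then 1 else 0

/-! ### Classical operators, special matrices, and intertwining inclusions -/

set_option linter.unnecessarySeqFocus false

/-- The scalar slash `(f ∣_k m)(τ) = (a/d)^{k/2} f((aτ+b)/d)` for `m = (a b; 0 d)`. -/
def cmslash (k : ℤ) (m : GL2ℤ) (f : ℍ → ℂ) : ℍ → ℂ :=
  fun τ => (((((m 0 0 : ℤ) : ℝ) / ((m 1 1 : ℤ) : ℝ)) ^ ((k : ℝ) / 2) : ℝ) : ℂ) *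
    f (utAct m τ)

/-- `𝔢_γ`, the standard basis vector of `ℂ[Γ\SL(2,ℤ)]` at the coset `Γγ`. -/
def eCos (Γ : Subgroup SL(2, ℤ)) (γ : SL(2, ℤ)) : Cos Γ → ℂ :=
  fun c => if c = mkCos Γ γ then 1 else 0

/-- The matrix `m_M = diag(M, 1) ∈ Δ_M`. -/
def mMat (M : ℕ) (hM : 0 < M) : Delta M :=
  ⟨!![(M : ℤ), 0; 0, 1], by
    refine ⟨?_, ?_, ?_, ?_, ?_⟩ <;> simp <;> omega⟩

/-- The matrix `m'_M = diag(1, M) ∈ Δ_M`. -/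
def mMat' (M : ℕ) (hM : 0 < M) : Delta M :=
  ⟨!![1, 0; 0, (M : ℤ)], by
    refine ⟨?_, ?_, ?_, ?_, ?_⟩ <;> simp <;> omega⟩

/-- The matrix `m_{M,b} = (M b; 0 M) ∈ Δ_{M²}` for `0 ≤ b < M`. -/
def mMatB (M : ℕ) (b : Fin M) : Delta (M * M) :=
  ⟨!![(M : ℤ), (b : ℤ); 0, (M : ℤ)], by
    have hb := b.2
    refine ⟨?_, ?_, ?_, ?_, ?_⟩ <;> simp <;> omega⟩

/-- The matrix `diag(M, M) ∈ Δ_{M²}`. -/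
def mMatMM (M : ℕ) (hM : 0 < M) : Delta (M * M) :=
  ⟨!![(M : ℤ), 0; 0, (M : ℤ)], by
    refine ⟨?_, ?_, ?_, ?_, ?_⟩ <;> simp <;> omega⟩

/-- Rescaling `({\rm sc}_M f)(τ) = f(M τ)`. -/
def scMul (M : ℕ) (f : ℍ → ℂ) : ℍ → ℂ := fun τ => f (utAct !![(M : ℤ), 0; 0, 1] τ)

/-- Rescaling `({\rm sc}_{1/M} f)(τ) = f(τ / M)`. -/
def scDiv (M : ℕ) (f : ℍ → ℂ) : ℍ → ℂ := fun τ => f (utAct !![1, 0; 0, (M : ℤ)] τ)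

/-- The classical Hecke operator
`(f ∣_{k,χ} T_M)(τ) = M^{k-1} ∑_{d ∣ M, 0 ≤ b < d} d^{-k} conj(χ(d)) f((M d⁻¹ τ + b)/d)`. -/
def classicalHecke {N : ℕ} (M : ℕ) (k : ℤ) (χ : DirichletCharacter ℂ N)
    (f : ℍ → ℂ) : ℍ → ℂ :=
  fun τ => (M : ℂ) ^ (k - 1) *
    ∑ d ∈ M.divisors, ∑ b ∈ Finset.range d,
      ((d : ℂ)) ^ (-k) * conj (χ ((d : ℕ) : ZMod N)) *
        f (utAct !![((M / d : ℕ) : ℤ), (b : ℤ); 0, ((d : ℕ) : ℤ)] τ)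

/-- `e_M(x) = exp(2πi x/M)`. -/
def eM (M : ℕ) (x : ℤ) : ℂ := Complex.exp (2 * Real.pi * Complex.I * x / M)

/-- The Gauss sum `G(ε, e_M(b)) = ∑_{a mod M} ε(a) e_M(a b)`. -/
def gaussSumE {M : ℕ} (ε : DirichletCharacter ℂ M) (b : ℤ) : ℂ :=
  ∑ a ∈ Finset.range M, ε ((a : ℕ) : ZMod M) * eM M ((a : ℤ) * b)

/-- The value `χ(I_{I₂}(δ))` of a Dirichlet character mod `N` on the cocycle
`I_{I₂}(δ) ∈ Γ₀(N)`. -/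
def cocVal {N : ℕ} (χ : DirichletCharacter ℂ N) (sec : Cos (Gamma0 N) → SL(2, ℤ))
    (δ : SL(2, ℤ)) : ℂ :=
  dirSL χ (indCoc (Gamma0 N) sec (mkCos (Gamma0 N) 1) δ)

/-- The inclusion `ι_Hecke : ρ_χ → T_M ρ_χ`,
`𝔢_γ ↦ M^{k/2-1} ∑_{m ∈ Δ_M} χ(m) conj(χ(I_{I₂}(I_m(γ)))) 𝔢_{I_m(γ)} ⊗ 𝔢_{m·γ}`. -/
def iotaHecke {N : ℕ} (M : ℕ) (k : ℤ) (χ : DirichletCharacter ℂ N)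
    (sec : Cos (Gamma0 N) → SL(2, ℤ))
    (bar : Delta M → SL(2, ℤ) → Delta M) (coc : Delta M → SL(2, ℤ) → SL(2, ℤ)) :
    Matrix (Cos (Gamma0 N) × Delta M) (Cos (Gamma0 N)) ℂ :=
  Matrix.of fun p c =>
    ((((M : ℝ) ^ ((k : ℝ) / 2 - 1) : ℝ)) : ℂ) *
      ∑ m : Delta M,
        if p.2 = bar m (sec c) ∧ p.1 = mkCos (Gamma0 N) (coc m (sec c)) then
          χ ((m.1 1 1 : ℤ) : ZMod N) * conj (cocVal χ sec (coc m (sec c)))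
        else 0

/-- The inclusion `ι_AL : ρ_{χ'} → T_M ρ_χ`,
`𝔢_γ ↦ conj(χ(I_{I₂}(γ_{M,N} I_{m_M}(γ)))) 𝔢_{γ_{M,N} I_{m_M}(γ)} ⊗ 𝔢_{m_M·γ}`. -/
def iotaAL {N : ℕ} (M : ℕ) (hM : 0 < M) (χ : DirichletCharacter ℂ N)
    (sec : Cos (Gamma0 N) → SL(2, ℤ)) (γMN : SL(2, ℤ))
    (bar : Delta M → SL(2, ℤ) → Delta M) (coc : Delta M → SL(2, ℤ) → SL(2, ℤ)) :
    Matrix (Cos (Gamma0 N) × Delta M) (Cos (Gamma0 N)) ℂ :=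
  Matrix.of fun p c =>
    if p.2 = bar (mMat M hM) (sec c) ∧
        p.1 = mkCos (Gamma0 N) (γMN * coc (mMat M hM) (sec c)) then
      conj (cocVal χ sec (γMN * coc (mMat M hM) (sec c)))
    else 0

/-- The inclusion `ι_old : ρ_{χ_M} → T_M ρ_χ`,
`𝔢_γ ↦ M^{-k/2} conj(χ(I_{I₂}(I_{m_M}(γ)))) 𝔢_{I_{m_M}(γ)} ⊗ 𝔢_{m_M·γ}`. -/
def iotaOld {N : ℕ} (M : ℕ) (hM : 0 < M) (k : ℤ) (χ : DirichletCharacter ℂ N)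
    (sec : Cos (Gamma0 N) → SL(2, ℤ)) (secMN : Cos (Gamma0 (M * N)) → SL(2, ℤ))
    (bar : Delta M → SL(2, ℤ) → Delta M) (coc : Delta M → SL(2, ℤ) → SL(2, ℤ)) :
    Matrix (Cos (Gamma0 N) × Delta M) (Cos (Gamma0 (M * N))) ℂ :=
  Matrix.of fun p c =>
    if p.2 = bar (mMat M hM) (secMN c) ∧
        p.1 = mkCos (Gamma0 N) (coc (mMat M hM) (secMN c)) then
      ((((M : ℝ) ^ (-((k : ℝ) / 2)) : ℝ)) : ℂ) *
        conj (cocVal χ sec (coc (mMat M hM) (secMN c)))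
    else 0

/-- The subgroup `Γ₁(N², N) = {γ : c(γ) ≡ 0 mod N², a(γ) ≡ d(γ) ≡ 1 mod N}`. -/
def Gamma1Sq (N : ℕ) : Subgroup SL(2, ℤ) := Gamma0 (N * N) ⊓ Gamma1 N

instance (N : ℕ) [NeZero N] : (Gamma1Sq N).FiniteIndex := by
  unfold Gamma1Sq
  infer_instance

/-- The inclusion `ι_{Γ(N)} : ρ_{Γ(N)} → T_N ρ_{Γ₁(N²,N)}`,
`𝔢_γ ↦ N^{k/2} 𝔢_{I_{m'_N}(γ)} ⊗ 𝔢_{m'_N·γ}`. -/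
def iotaGammaN (N : ℕ) (hN : 0 < N) (k : ℤ)
    (secG : Cos (CongruenceSubgroup.Gamma N) → SL(2, ℤ))
    (bar : Delta N → SL(2, ℤ) → Delta N) (coc : Delta N → SL(2, ℤ) → SL(2, ℤ)) :
    Matrix (Cos (Gamma1Sq N) × Delta N) (Cos (CongruenceSubgroup.Gamma N)) ℂ :=
  Matrix.of fun p c =>
    if p.2 = bar (mMat' N hN) (secG c) ∧
        p.1 = mkCos (Gamma1Sq N) (coc (mMat' N hN) (secG c)) then
      ((((N : ℝ) ^ ((k : ℝ) / 2) : ℝ)) : ℂ)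
    else 0

/-- The inclusion `ι_twist : ρ_{χ'} → T_{M²} ρ_χ`,
`𝔢_γ ↦ M⁻¹ ∑_{b mod M} G(ε, e_M(-b)) conj(χ(I_{I₂}(I_{m_{M,b}}(γ))))
𝔢_{I_{m_{M,b}}(γ)} ⊗ 𝔢_{m_{M,b}·γ}`. -/
def iotaTwist {N : ℕ} (M : ℕ) (χ : DirichletCharacter ℂ N)
    (ε : DirichletCharacter ℂ M)
    (sec : Cos (Gamma0 N) → SL(2, ℤ)) (sec' : Cos (Gamma0 (N * (M * M))) → SL(2, ℤ))
    (bar : Delta (M * M) → SL(2, ℤ) → Delta (M * M))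
    (coc : Delta (M * M) → SL(2, ℤ) → SL(2, ℤ)) :
    Matrix (Cos (Gamma0 N) × Delta (M * M)) (Cos (Gamma0 (N * (M * M)))) ℂ :=
  Matrix.of fun p c =>
    ((M : ℂ))⁻¹ *
      ∑ b : Fin M,
        if p.2 = bar (mMatB M b) (sec' c) ∧
            p.1 = mkCos (Gamma0 N) (coc (mMatB M b) (sec' c)) then
          gaussSumE ε (-(b : ℤ)) * conj (cocVal χ sec (coc (mMatB M b) (sec' c)))
        else 0

/-- The inclusion `ι_id : ρ_χ → T_{M²} ρ_χ`, `𝔢_γ ↦ 𝔢_γ ⊗ 𝔢_{diag(M,M)}`. -/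
def iotaId {N : ℕ} (M : ℕ) (hM : 0 < M) :
    Matrix (Cos (Gamma0 N) × Delta (M * M)) (Cos (Gamma0 N)) ℂ :=
  Matrix.of fun p c => if p.1 = c ∧ p.2 = mMatMM M hM then 1 else 0

end VVMF

open VVMF

/-! The component of `Ind f` at the coset `Γβ` is `f ∣_k β`; by the cocycle relation
`βγ = I_β(γ) · overline(βγ)`, slash-invariance of `Ind f` under `γ` reduces to the
`χ`-invariance of `f` under `I_β(γ) ∈ Γ₀(N)`. Conversely, a form `F` of type `Ind_Γ χ` is
determined by its component at the identity coset: invariance of `F` under a representative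
`β` carries the `I₂`-component to the `β`-component, with the factor `χ(I_{I₂}(β)) = χ(1) = 1`. -/

namespace VVMF

open scoped ModularForm

section Slash

lemma cslash_eq_slash (k : ℤ) (γ : SL(2, ℤ)) (f : ℍ → ℂ) : cslash k γ f = f ∣[k] γ := by
  funext τ
  rw [ModularForm.SL_slash_apply, cslash, denomZ, ← ModularGroup.denom_apply, mul_comm]

lemma cslash_one (k : ℤ) (f : ℍ → ℂ) : cslash k 1 f = f := by
  rw [cslash_eq_slash, SlashAction.slash_one]

lemma cslash_mul (k : ℤ) (α β : SL(2, ℤ)) (f : ℍ → ℂ) :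
    cslash k (α * β) f = cslash k β (cslash k α f) := by
  simp only [cslash_eq_slash, SlashAction.slash_mul]

lemma cslash_const_mul (k : ℤ) (γ : SL(2, ℤ)) (a : ℂ) (f : ℍ → ℂ) :
    cslash k γ (fun τ => a * f τ) = fun τ => a * cslash k γ f τ := by
  funext τ
  exact mul_left_comm _ _ _

lemma _root_.MDifferentiable.cslash {f : ℍ → ℂ} (hf : MDifferentiable 𝓘(ℂ) 𝓘(ℂ) f)
    (k : ℤ) (γ : SL(2, ℤ)) : MDifferentiable 𝓘(ℂ) 𝓘(ℂ) (cslash k γ f) := by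
  rw [cslash_eq_slash, ModularForm.SL_slash]
  exact hf.slash k _

end Slash

section Cosets

variable {Γ : Subgroup SL(2, ℤ)}

lemma cosMul_mkCos (γ δ : SL(2, ℤ)) : cosMul Γ (mkCos Γ γ) δ = mkCos Γ (γ * δ) := rfl

lemma mkCos_eq_mkCos_iff {γ δ : SL(2, ℤ)} : mkCos Γ γ = mkCos Γ δ ↔ δ * γ⁻¹ ∈ Γ :=
  Quotient.eq.trans QuotientGroup.rightRel_apply

lemma cosMul_cosMul (c : Cos Γ) (δ δ' : SL(2, ℤ)) :
    cosMul Γ (cosMul Γ c δ) δ' = cosMul Γ c (δ * δ') := by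
  induction c using Quotient.ind
  exact congrArg (mkCos Γ) (mul_assoc _ _ _)

lemma cosMul_one (c : Cos Γ) : cosMul Γ c 1 = c := by
  induction c using Quotient.ind
  exact congrArg (mkCos Γ) (mul_one _)

lemma eq_cosMul_iff (c c' : Cos Γ) (γ : SL(2, ℤ)) :
    c = cosMul Γ c' γ ↔ cosMul Γ c γ⁻¹ = c' := by
  constructor
  · rintro rfl
    rw [cosMul_cosMul, mul_inv_cancel, cosMul_one]
  · rintro rfl
    rw [cosMul_cosMul, inv_mul_cancel, cosMul_one]

lemma cosMul_mkCos_one_of_mem {g : SL(2, ℤ)} (hg : g ∈ Γ) :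
    cosMul Γ (mkCos Γ 1) g = mkCos Γ 1 := by
  rw [cosMul_mkCos, one_mul, mkCos_eq_mkCos_iff, one_mul]
  exact inv_mem hg

variable {sec : Cos Γ → SL(2, ℤ)}

lemma IsSection.cosMul_mkCos_one (hsec : IsSection Γ sec) (c : Cos Γ) :
    cosMul Γ (mkCos Γ 1) (sec c) = c := by
  rw [cosMul_mkCos, one_mul, hsec.1]

lemma IsSection.cosMul_inv (hsec : IsSection Γ sec) (c : Cos Γ) :
    cosMul Γ c (sec c)⁻¹ = mkCos Γ 1 :=
  ((eq_cosMul_iff _ _ _).mp (hsec.cosMul_mkCos_one c).symm)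

lemma sec_mul_eq_indCoc_mul (c : Cos Γ) (δ : SL(2, ℤ)) :
    sec c * δ = indCoc Γ sec c δ * sec (cosMul Γ c δ) := by
  rw [indCoc, inv_mul_cancel_right]

lemma indCoc_mem (hsec : IsSection Γ sec) (c : Cos Γ) (δ : SL(2, ℤ)) :
    indCoc Γ sec c δ ∈ Γ := by
  have h : mkCos Γ (sec (cosMul Γ c δ)) = mkCos Γ (sec c * δ) := by
    rw [hsec.1, ← cosMul_mkCos, hsec.1]
  exact mkCos_eq_mkCos_iff.mp h

lemma indCoc_mkCos_one_of_mem (hsec : IsSection Γ sec) {g : SL(2, ℤ)} (hg : g ∈ Γ) :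
    indCoc Γ sec (mkCos Γ 1) g = g := by
  rw [indCoc, cosMul_mkCos_one_of_mem hg, hsec.2, one_mul, inv_one, mul_one]

lemma indCoc_inv_sec (hsec : IsSection Γ sec) (c : Cos Γ) :
    indCoc Γ sec c (sec c)⁻¹ = 1 := by
  rw [indCoc, hsec.cosMul_inv, hsec.2, mul_inv_cancel, inv_one, one_mul]

lemma indForm_component_one (hsec : IsSection Γ sec) (k : ℤ) (f : ℍ → ℂ) :
    (fun τ => indForm Γ sec k f τ (mkCos Γ 1)) = f := by
  simp only [indForm, hsec.2, cslash_one]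

end Cosets

section Induction

variable {Γ : Subgroup SL(2, ℤ)} [Fintype (Cos Γ)] {sec : Cos Γ → SL(2, ℤ)}
  {χf : SL(2, ℤ) → ℂ} {k : ℤ}

lemma vslash_indRep (γ : SL(2, ℤ)) (F : ℍ → Cos Γ → ℂ) :
    vslash k (indRep Γ sec χf) γ F = fun τ c =>
      χf (indCoc Γ sec (cosMul Γ c γ⁻¹) γ)⁻¹ * cslash k γ (fun τ => F τ (cosMul Γ c γ⁻¹)) τ := by
  funext τ c
  simp only [vslash, Pi.smul_apply, smul_eq_mul, indRep, Matrix.mulVec, dotProduct, inv_inv,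
    cslash]
  rw [Finset.sum_eq_single (cosMul Γ c γ⁻¹), if_pos ((eq_cosMul_iff c _ γ).mpr rfl)]
  · ring
  · intro c' _ hc'
    rw [if_neg fun h => hc' ((eq_cosMul_iff c c' γ).mp h).symm, zero_mul]
  · exact fun h => absurd (Finset.mem_univ _) h

lemma vslash_indRep_indForm (hsec : IsSection Γ sec) {f : ℍ → ℂ}
    (hf : ∀ g ∈ Γ, (fun τ => χf g⁻¹ * cslash k g f τ) = f) (γ : SL(2, ℤ)) :
    vslash k (indRep Γ sec χf) γ (indForm Γ sec k f) = indForm Γ sec k f := by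
  funext τ c
  set c' := cosMul Γ c γ⁻¹
  set g := indCoc Γ sec c' γ
  have hc' : cosMul Γ c' γ = c := by rw [cosMul_cosMul, inv_mul_cancel, cosMul_one]
  have hslash : cslash k γ (cslash k (sec c') f) = cslash k (sec c) (cslash k g f) := by
    rw [← cslash_mul, ← cslash_mul, sec_mul_eq_indCoc_mul, hc']
  calc vslash k (indRep Γ sec χf) γ (indForm Γ sec k f) τ c
      = χf g⁻¹ * cslash k γ (cslash k (sec c') f) τ := by rw [vslash_indRep]; rfl
    _ = cslash k (sec c) (fun τ => χf g⁻¹ * cslash k g f τ) τ := by rw [hslash, cslash_const_mul]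
    _ = cslash k (sec c) f τ := by rw [hf g (indCoc_mem hsec c' γ)]

/-- Obtained from invariance under `γ⁻¹` rather than `γ`, so that `χf` need not be inverted. -/
lemma cslash_component {F : ℍ → Cos Γ → ℂ} (hF : ∀ γ, vslash k (indRep Γ sec χf) γ F = F)
    (γ : SL(2, ℤ)) (c : Cos Γ) :
    cslash k γ (fun τ => F τ c) =
      fun τ => χf (indCoc Γ sec (cosMul Γ c γ) γ⁻¹)⁻¹ * F τ (cosMul Γ c γ) := by
  have h : (fun τ => F τ c) = fun τ => χf (indCoc Γ sec (cosMul Γ c γ) γ⁻¹)⁻¹ *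
      cslash k γ⁻¹ (fun τ => F τ (cosMul Γ c γ)) τ := by
    funext τ
    have hinv := congrFun (congrFun (vslash_indRep (k := k) (sec := sec) (χf := χf) γ⁻¹ F) τ) c
    beta_reduce at hinv
    rwa [hF, inv_inv] at hinv
  rw [h, cslash_const_mul, ← cslash_mul, inv_mul_cancel, cslash_one]

lemma component_one_invariant (hsec : IsSection Γ sec) {F : ℍ → Cos Γ → ℂ}
    (hF : ∀ γ, vslash k (indRep Γ sec χf) γ F = F) {g : SL(2, ℤ)} (hg : g ∈ Γ) :
    (fun τ => χf g⁻¹ * cslash k g (fun τ => F τ (mkCos Γ 1)) τ) = fun τ => F τ (mkCos Γ 1) := by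
  funext τ
  have h := congrFun (congrFun (vslash_indRep (k := k) (sec := sec) (χf := χf) g F) τ) (mkCos Γ 1)
  beta_reduce at h
  rw [hF, cosMul_mkCos_one_of_mem (inv_mem hg), indCoc_mkCos_one_of_mem hsec hg] at h
  exact h.symm

lemma indForm_component_one_eq (hsec : IsSection Γ sec) (hχf : χf 1 = 1) {F : ℍ → Cos Γ → ℂ}
    (hF : ∀ γ, vslash k (indRep Γ sec χf) γ F = F) :
    indForm Γ sec k (fun τ => F τ (mkCos Γ 1)) = F := by
  funext τ c
  have h := congrFun (cslash_component hF (sec c) (mkCos Γ 1)) τ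
  rwa [hsec.cosMul_mkCos_one, indCoc_inv_sec hsec, inv_one, hχf, one_mul] at h

lemma pairF_eCos_one (F : ℍ → Cos Γ → ℂ) :
    pairF F (eCos Γ 1) = fun τ => F τ (mkCos Γ 1) := by
  funext τ
  simp [pairF, eCos, apply_ite conj]

end Induction

lemma dirSL_one {N : ℕ} (χ : DirichletCharacter ℂ N) : dirSL χ 1 = 1 := by
  simp [dirSL]

end VVMF

/-- For every `k`, `N` and Dirichlet character `χ` mod `N`, the
induction map `Ind : M_k(Γ₀(N), χ) → M_k(Ind_{Γ₀(N)} χ)` is a linear isomorphism, with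
inverse `f ↦ ⟨f, 𝔢_{I₂}⟩`. -/
theorem induction_is_isomorphism {N : ℕ} [NeZero N] (k : ℤ)
    (χ : DirichletCharacter ℂ N)
    (sec : Cos (Gamma0 N) → SL(2, ℤ)) (hsec : IsSection (Gamma0 N) sec) :
    -- `Ind` maps `M_k(Γ₀(N), χ)` into `M_k(Ind_{Γ₀(N)} χ)`
    (∀ f : ℍ → ℂ, IsModFormChi k χ f →
      IsVModForm k (indRep (Gamma0 N) sec (dirSL χ)) (indForm (Gamma0 N) sec k f)) ∧
    -- `Ind` is linear
    (∀ (a : ℂ) (f g : ℍ → ℂ),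
      indForm (Gamma0 N) sec k (fun τ => a * f τ + g τ) =
        fun τ c => a * indForm (Gamma0 N) sec k f τ c + indForm (Gamma0 N) sec k g τ c) ∧
    -- `f ↦ ⟨f, 𝔢_{I₂}⟩` maps `M_k(Ind_{Γ₀(N)} χ)` into `M_k(Γ₀(N), χ)`
    (∀ F : ℍ → Cos (Gamma0 N) → ℂ, IsVModForm k (indRep (Gamma0 N) sec (dirSL χ)) F →
      IsModFormChi k χ (pairF F (eCos (Gamma0 N) 1))) ∧
    -- `f ↦ ⟨f, 𝔢_{I₂}⟩` is a two-sided inverse of `Ind`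
    (∀ f : ℍ → ℂ, IsModFormChi k χ f →
      pairF (indForm (Gamma0 N) sec k f) (eCos (Gamma0 N) 1) = f) ∧
    (∀ F : ℍ → Cos (Gamma0 N) → ℂ, IsVModForm k (indRep (Gamma0 N) sec (dirSL χ)) F →
      indForm (Gamma0 N) sec k (pairF F (eCos (Gamma0 N) 1)) = F) := by
  refine ⟨?_, ?_, ?_, ?_, ?_⟩
  · rintro f ⟨hol, hinv, hbdd⟩
    exact ⟨fun c => hol.cslash k (sec c), vslash_indRep_indForm hsec hinv, fun c => hbdd (sec c)⟩
  · intro a f g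
    funext τ c
    simp only [indForm, cslash]
    ring
  · rintro F ⟨hol, hinv, hbdd⟩
    rw [pairF_eCos_one]
    refine ⟨hol _, fun g hg => component_one_invariant hsec hinv hg, fun γ => ?_⟩
    rw [cslash_component hinv]
    exact (hbdd _).const_mul_left _
  · intro f _
    rw [pairF_eCos_one, indForm_component_one hsec k]
  · rintro F ⟨-, hinv, -⟩
    rw [pairF_eCos_one, indForm_component_one_eq hsec (dirSL_one χ) hinv]
end
end

section
/- Let M be a positive integer and ρ a finite-dimensional complex representation of SL₂(ℤ). If ker ρ has finite index in SL₂(ℤ), then ker(T_M ρ) has finite index in SL₂(ℤ). Moreover, if Γ(N) ⊆ ker ρ for some positive integer N, then Γ(MN) ⊆ ker(T_M ρ); in particular, if ker ρ is a congruence subgroup then so is ker(T_M ρ). -/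
open scoped MatrixGroups Manifold Kronecker ComplexConjugate Classical ComplexOrder
open Matrix UpperHalfPlane Complex Filter MeasureTheory CongruenceSubgroup

noncomputable section

open VVMF

/-!
Since `Δ_M` is a system of representatives for `SL₂(ℤ)` acting on the left on integer
matrices of determinant `M`, the decomposition `m γ = I_m(γ) · (m·γ)` is unique. Hence
`m·γ` is a right action and `I` a cocycle, so that `T_M ρ` is a representation, and
`T_M ρ(γ) = 1` as soon as `γ` fixes every `m ∈ Δ_M` with `I_m(γ) ∈ ker ρ`. These `γ` form
a subgroup `K`, and `δ ↦ (m ↦ (m·δ, I_m(δ) ker ρ))` embeds `SL₂(ℤ)/K` into a finite set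
when `ker ρ` has finite index.
For `γ = 1 + MN A ∈ Γ(MN)` one has `m γ = h m` with `h = 1 + N m A adj(m) ∈ Γ(N)`, so
uniqueness gives `m·γ = m` and `I_m(γ) = h ∈ Γ(N)`.
-/

structure IsCocycle {G X : Type*} [Group G] (act : X → G → X) (coc : X → G → G) : Prop where
  act_one : ∀ x, act x 1 = x
  act_mul : ∀ x g h, act x (g * h) = act (act x g) h
  coc_one : ∀ x, coc x 1 = 1
  coc_mul : ∀ x g h, coc x (g * h) = coc x g * coc (act x g) h

def cocycleProfile {G X : Type*} [Group G] (act : X → G → X) (coc : X → G → G)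
    (N : Subgroup G) (g : G) : X → X × G ⧸ N :=
  fun x => (act x g, coc x g)

namespace IsCocycle

variable {G X : Type*} [Group G] {act : X → G → X} {coc : X → G → G} (hc : IsCocycle act coc)
include hc

lemma act_act_inv (x : X) (g : G) : act (act x g⁻¹) g = x := by
  rw [← hc.act_mul, inv_mul_cancel, hc.act_one]

lemma coc_inv (x : X) (g : G) : coc x g⁻¹ = (coc (act x g⁻¹) g)⁻¹ := by
  refine eq_inv_of_mul_eq_one_left ?_
  rw [← hc.coc_mul, inv_mul_cancel, hc.coc_one]

def ker (N : Subgroup G) : Subgroup G where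
  carrier := {g | ∀ x, act x g = x ∧ coc x g ∈ N}
  one_mem' x := ⟨hc.act_one x, by rw [hc.coc_one]; exact N.one_mem⟩
  mul_mem' {g h} hg hh x := by
    refine ⟨by rw [hc.act_mul, (hg x).1, (hh x).1], ?_⟩
    rw [hc.coc_mul, (hg x).1]
    exact N.mul_mem (hg x).2 (hh x).2
  inv_mem' {g} hg x := by
    have hfix : act x g⁻¹ = x := by
      conv_rhs => rw [← hc.act_act_inv x g, (hg _).1]
    refine ⟨hfix, ?_⟩
    rw [hc.coc_inv, hfix]
    exact N.inv_mem (hg x).2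

variable {hc} in
lemma mem_ker {N : Subgroup G} {g : G} : g ∈ hc.ker N ↔ ∀ x, act x g = x ∧ coc x g ∈ N :=
  Iff.rfl

lemma ker_mono {N₁ N₂ : Subgroup G} (h : N₁ ≤ N₂) : hc.ker N₁ ≤ hc.ker N₂ :=
  fun _ hg x => ⟨(hg x).1, h (hg x).2⟩

lemma cocycleProfile_eq_iff {N : Subgroup G} {a b : G} :
    cocycleProfile act coc N a = cocycleProfile act coc N b ↔ a⁻¹ * b ∈ hc.ker N := by
  constructor
  · intro h x
    have hact : act (act x a⁻¹) a = act (act x a⁻¹) b := congrArg Prod.fst (congrFun h _)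
    have hcoc : (coc (act x a⁻¹) a : G ⧸ N) = coc (act x a⁻¹) b :=
      congrArg Prod.snd (congrFun h _)
    refine ⟨by rw [hc.act_mul, ← hact, hc.act_act_inv], ?_⟩
    rw [hc.coc_mul, hc.coc_inv]
    exact QuotientGroup.eq.mp hcoc
  · intro h
    obtain ⟨k, hk, rfl⟩ : ∃ k ∈ hc.ker N, b = a * k := ⟨a⁻¹ * b, h, by group⟩
    funext x
    refine Prod.ext (by simp only [cocycleProfile, hc.act_mul, (hk _).1]) ?_
    simp only [cocycleProfile, hc.coc_mul]
    exact QuotientGroup.eq.mpr (by simpa using (hk _).2)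

lemma finiteIndex_ker [Finite X] (N : Subgroup G) [N.FiniteIndex] :
    (hc.ker N).FiniteIndex := by
  have : Finite (G ⧸ hc.ker N) :=
    Finite.of_injective
      (fun q : G ⧸ hc.ker N => Quotient.liftOn' q (cocycleProfile act coc N)
        fun _ _ h => hc.cocycleProfile_eq_iff.mpr (QuotientGroup.leftRel_apply.mp h))
      (by
        rintro ⟨a⟩ ⟨b⟩ h
        exact Quotient.sound' (QuotientGroup.leftRel_apply.mpr (hc.cocycleProfile_eq_iff.mp h)))
  exact Subgroup.finiteIndex_of_finite_quotient

end IsCocycle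

namespace VVMF

namespace Delta

variable {M : ℕ}

lemma det_eq (m : Delta M) : m.1.det = M := by
  obtain ⟨hc, -, had, -, -⟩ := m.2
  rw [Matrix.det_fin_two, hc, mul_zero, sub_zero, had]

lemma det_ne_zero (m : Delta M) : m.1.det ≠ 0 := by
  obtain ⟨hc, ha, -, hb, hbd⟩ := m.2
  rw [Matrix.det_fin_two, hc, mul_zero, sub_zero]
  exact (mul_pos ha (hb.trans_lt hbd)).ne'

lemma eq_one_of_mul_eq {g : SL(2, ℤ)} {m₁ m₂ : Delta M} (h : (g : GL2ℤ) * m₁.1 = m₂.1) :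
    g = 1 := by
  obtain ⟨hc, ha, -, hb, hbd⟩ := m₁.2
  obtain ⟨hc', ha', -, hb', hbd'⟩ := m₂.2
  have entry : ∀ i j, g i 0 * m₁.1 0 j + g i 1 * m₁.1 1 j = m₂.1 i j := fun i j => by
    simpa [Matrix.mul_apply, Fin.sum_univ_two] using congrFun (congrFun h i) j
  have hdet : g 0 0 * g 1 1 - g 0 1 * g 1 0 = 1 := by
    rw [← Matrix.det_fin_two]; exact g.2
  have e00 := entry 0 0
  have e01 := entry 0 1
  have e10 := entry 1 0
  have e11 := entry 1 1
  simp only [hc, hc', mul_zero, add_zero] at e00 e10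
  have hg10 : g 1 0 = 0 := by
    rcases mul_eq_zero.mp e10 with h | h
    · exact h
    · omega
  have hg00 : g 0 0 = 1 := by
    simp only [hg10, mul_zero, sub_zero] at hdet
    rcases Int.mul_eq_one_iff_eq_one_or_neg_one.mp hdet with ⟨h, -⟩ | ⟨h, -⟩
    · exact h
    · nlinarith
  have hg11 : g 1 1 = 1 := by simpa [hg00, hg10] using hdet
  simp only [hg00, hg10, hg11, one_mul, zero_mul, zero_add] at e01 e11
  -- `b₂ = b₁ + g₀₁ d` with `0 ≤ b₁, b₂ < d` forces `g₀₁ = 0`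
  have hg01 : g 0 1 = 0 := by
    rcases lt_trichotomy (g 0 1) 0 with h | h | h <;> nlinarith
  ext i j
  fin_cases i <;> fin_cases j <;> simp [hg00, hg01, hg10, hg11]

lemma eq_of_mul_eq_mul {g₁ g₂ : SL(2, ℤ)} {m₁ m₂ : Delta M}
    (h : (g₁ : GL2ℤ) * m₁.1 = (g₂ : GL2ℤ) * m₂.1) : g₁ = g₂ ∧ m₁ = m₂ := by
  have h' : ((g₂⁻¹ * g₁ : SL(2, ℤ)) : GL2ℤ) * m₁.1 = m₂.1 := by
    rw [Matrix.SpecialLinearGroup.coe_mul, Matrix.mul_assoc, h, ← Matrix.mul_assoc,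
      ← Matrix.SpecialLinearGroup.coe_mul, inv_mul_cancel, Matrix.SpecialLinearGroup.coe_one,
      Matrix.one_mul]
  have hg := eq_one_of_mul_eq h'
  rw [hg, Matrix.SpecialLinearGroup.coe_one, Matrix.one_mul] at h'
  exact ⟨(inv_mul_eq_one.mp hg).symm, Subtype.ext h'⟩

end Delta

lemma mem_Gamma_iff_exists_eq_one_add_smul {N : ℕ} {γ : SL(2, ℤ)} :
    γ ∈ CongruenceSubgroup.Gamma N ↔ ∃ A : GL2ℤ, (γ : GL2ℤ) = 1 + (N : ℤ) • A := by
  have entry : ∀ i j, (γ.map (Int.castRingHom (ZMod N)) : Matrix (Fin 2) (Fin 2) (ZMod N)) i j -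
      (1 : Matrix (Fin 2) (Fin 2) (ZMod N)) i j = (((γ : GL2ℤ) - 1) i j : ℤ) := by
    intro i j
    simp [Matrix.one_apply]
  rw [Gamma_mem']
  constructor
  · intro h
    have hdvd : ∀ i j, (N : ℤ) ∣ ((γ : GL2ℤ) - 1) i j := fun i j =>
      (ZMod.intCast_zmod_eq_zero_iff_dvd _ _).mp (by rw [← entry, h]; simp)
    choose A hA using hdvd
    refine ⟨Matrix.of A, ?_⟩
    ext i j
    simp [← hA]
  · rintro ⟨A, hA⟩
    refine Matrix.SpecialLinearGroup.ext _ _ fun i j => ?_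
    rw [← sub_eq_zero, Matrix.SpecialLinearGroup.coe_one, entry, hA, add_sub_cancel_left,
      Matrix.smul_apply, smul_eq_mul, Int.cast_mul, Int.cast_natCast, ZMod.natCast_self, zero_mul]

lemma exists_mem_Gamma_mul_eq_mul {M N : ℕ} {γ : SL(2, ℤ)}
    (hγ : γ ∈ CongruenceSubgroup.Gamma (M * N)) (m : Delta M) :
    ∃ h ∈ CongruenceSubgroup.Gamma N, (h : GL2ℤ) * m.1 = m.1 * γ := by
  obtain ⟨A, hA⟩ := mem_Gamma_iff_exists_eq_one_add_smul.mp hγ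
  -- `h = m γ m⁻¹`, written with `adj m = M m⁻¹`
  set H : GL2ℤ := 1 + (N : ℤ) • (m.1 * A * m.1.adjugate)
  have hHm : H * m.1 = m.1 * γ := by
    rw [hA, Matrix.add_mul, Matrix.one_mul, Matrix.smul_mul, Matrix.mul_assoc _ m.1.adjugate,
      Matrix.adjugate_mul, Delta.det_eq, Matrix.mul_smul, Matrix.mul_one, smul_smul,
      Matrix.mul_add, Matrix.mul_one, Matrix.mul_smul]
    push_cast
    ring_nf
  have hdet : H.det = 1 := by
    have := congrArg Matrix.det hHm
    rw [Matrix.det_mul, Matrix.det_mul, Matrix.SpecialLinearGroup.det_coe, mul_one] at this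
    exact (mul_eq_right₀ (Delta.det_ne_zero m)).mp this
  exact ⟨⟨H, hdet⟩, mem_Gamma_iff_exists_eq_one_add_smul.mpr ⟨_, rfl⟩, hHm⟩

-- `repKer` is built with the classical `DecidableEq ι`; this holds for any other instance.
lemma mem_repKer_iff {ι : Type*} [Fintype ι] [DecidableEq ι] {ρ : SL(2, ℤ) → Matrix ι ι ℂ}
    (hρ : IsRep ρ) {γ : SL(2, ℤ)} : γ ∈ repKer ρ hρ ↔ ρ γ = 1 := by
  simp only [repKer, Subgroup.mem_mk, Submonoid.mem_mk, Subsemigroup.mem_mk, Set.mem_ofPred_eq]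
  congr!

variable {M : ℕ} {bar : Delta M → SL(2, ℤ) → Delta M} {coc : Delta M → SL(2, ℤ) → SL(2, ℤ)}

namespace HeckeData

variable (hd : HeckeData M bar coc)
include hd

lemma eq_of_mul_eq {m m' : Delta M} {γ g : SL(2, ℤ)} (h : (g : GL2ℤ) * m'.1 = m.1 * γ) :
    coc m γ = g ∧ bar m γ = m' :=
  Delta.eq_of_mul_eq_mul ((hd m γ).trans h.symm)

lemma isCocycle : IsCocycle bar coc := by
  have hone (m : Delta M) := hd.eq_of_mul_eq (m := m) (g := 1) (m' := m) (γ := 1) (by simp)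
  have hmul (m : Delta M) (γ δ : SL(2, ℤ)) := hd.eq_of_mul_eq (m := m) (γ := γ * δ)
    (g := coc m γ * coc (bar m γ) δ) (m' := bar (bar m γ) δ) (by
      rw [Matrix.SpecialLinearGroup.coe_mul, Matrix.mul_assoc, hd, ← Matrix.mul_assoc, hd,
        Matrix.mul_assoc, Matrix.SpecialLinearGroup.coe_mul])
  exact ⟨fun m => (hone m).2, fun m γ δ => (hmul m γ δ).2, fun m => (hone m).1,
    fun m γ δ => (hmul m γ δ).1⟩

lemma Gamma_le_ker (N : ℕ) :
    CongruenceSubgroup.Gamma (M * N) ≤ hd.isCocycle.ker (CongruenceSubgroup.Gamma N) := by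
  intro γ hγ m
  obtain ⟨h, hh, hmul⟩ := exists_mem_Gamma_mul_eq_mul hγ m
  obtain ⟨hcoc, hbar⟩ := hd.eq_of_mul_eq hmul
  exact ⟨hbar, hcoc ▸ hh⟩

end HeckeData

variable {ι : Type*} [Fintype ι] {ρ : SL(2, ℤ) → Matrix ι ι ℂ}

lemma heckeRep_isRep (hc : IsCocycle bar coc) (hρ : IsRep ρ) :
    IsRep (heckeRep M ρ bar coc) := by
  constructor
  · ext p q
    simp only [heckeRep, inv_one, hc.act_one, hc.coc_one, hρ.1, Matrix.one_apply,
      Prod.ext_iff]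
    split_ifs <;> tauto
  · intro γ δ
    ext p q
    simp only [heckeRep, Matrix.mul_apply, Fintype.sum_prod_type, _root_.mul_inv_rev,
      hc.act_mul, hc.coc_mul, hρ.2, ite_mul, mul_ite, zero_mul, mul_zero]
    rw [Finset.sum_comm]
    simp

lemma heckeRep_ker_le (hc : IsCocycle bar coc) (hρ : IsRep ρ) :
    hc.ker (repKer ρ hρ) ≤ repKer (heckeRep M ρ bar coc) (heckeRep_isRep hc hρ) := by
  intro γ hγ
  have hinv := hc.mem_ker.mp ((hc.ker _).inv_mem hγ)
  rw [mem_repKer_iff]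
  ext p q
  obtain ⟨hbar, hcoc⟩ := hinv q.2
  simp only [heckeRep, hbar, (mem_repKer_iff hρ).mp ((repKer ρ hρ).inv_mem hcoc),
    Matrix.one_apply, Prod.ext_iff]
  split_ifs <;> tauto

end VVMF

theorem heckeRep_kernel_general {ι : Type*} [Fintype ι] (M : ℕ)
    (ρ : SL(2, ℤ) → Matrix ι ι ℂ) (hρ : IsRep ρ)
    (bar : Delta M → SL(2, ℤ) → Delta M) (coc : Delta M → SL(2, ℤ) → SL(2, ℤ))
    (hd : HeckeData M bar coc) :
    ((repKer ρ hρ).FiniteIndex →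
      ∃ H : Subgroup SL(2, ℤ),
        (H : Set SL(2, ℤ)) = {γ | heckeRep M ρ bar coc γ = 1} ∧ H.FiniteIndex) ∧
    (∀ N : ℕ, 0 < N → (∀ γ ∈ CongruenceSubgroup.Gamma N, ρ γ = 1) →
      ∀ γ ∈ CongruenceSubgroup.Gamma (M * N), heckeRep M ρ bar coc γ = 1) := by
  have hc := hd.isCocycle
  have hker := heckeRep_ker_le hc hρ
  refine ⟨fun _ => ⟨repKer _ (heckeRep_isRep hc hρ), Set.ext fun γ => mem_repKer_iff _, ?_⟩,
    fun N _ hΓ γ hγ => ?_⟩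
  · have := hc.finiteIndex_ker (repKer ρ hρ)
    exact Subgroup.finiteIndex_of_le hker
  · have hΓker : CongruenceSubgroup.Gamma N ≤ repKer ρ hρ := fun g hg => hΓ g hg
    exact (mem_repKer_iff _).mp (hker (hc.ker_mono hΓker (hd.Gamma_le_ker N hγ)))

/-- If `ker ρ` has finite index in `SL₂(ℤ)`, then so does `ker (T_M ρ)`;
and if `Γ(N) ⊆ ker ρ`, then `Γ(MN) ⊆ ker (T_M ρ)`. In particular the kernel of `T_M ρ`
is a congruence subgroup whenever the kernel of `ρ` is. -/
theorem heckeRep_kernel {ι : Type*} [Fintype ι] (M : ℕ) (hM : 0 < M)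
    (ρ : SL(2, ℤ) → Matrix ι ι ℂ) (hρ : IsRep ρ)
    (bar : Delta M → SL(2, ℤ) → Delta M) (coc : Delta M → SL(2, ℤ) → SL(2, ℤ))
    (hd : HeckeData M bar coc) :
    ((repKer ρ hρ).FiniteIndex →
      ∃ H : Subgroup SL(2, ℤ),
        (H : Set SL(2, ℤ)) = {γ | heckeRep M ρ bar coc γ = 1} ∧ H.FiniteIndex) ∧
    (∀ N : ℕ, 0 < N → (∀ γ ∈ CongruenceSubgroup.Gamma N, ρ γ = 1) →
      ∀ γ ∈ CongruenceSubgroup.Gamma (M * N), heckeRep M ρ bar coc γ = 1) :=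
  heckeRep_kernel_general M ρ hρ bar coc hd
end
end

section
/- Let M be a positive integer and ρ, σ finite-dimensional complex SL₂(ℤ)-representations. (i) For every homomorphism φ : ρ → σ of SL₂(ℤ)-representations, the map T_M φ : T_M ρ → T_M σ, v ⊗ 𝔢_m ↦ φ(v) ⊗ 𝔢_m, is a homomorphism of SL₂(ℤ)-representations, and for a further homomorphism ψ : σ → ϖ one has T_M(ψ∘φ) = (T_M ψ)∘(T_M φ). (ii) The map 𝟙 → T_M 𝟙, c ↦ c·Σ_{m∈Δ_M} 𝔢_m, is an injective homomorphism of SL₂(ℤ)-representations. (iii) The map (T_M ρ) ⊗ (T_M σ) → T_M(ρ ⊗ σ) sending (v ⊗ 𝔢_m) ⊗ (w ⊗ 𝔢_{m′}) to (v ⊗ w) ⊗ 𝔢_m if m = m′ and to 0 otherwise is a surjective homomorphism of SL₂(ℤ)-representations. -/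
open scoped MatrixGroups Manifold Kronecker ComplexConjugate Classical ComplexOrder
open Matrix UpperHalfPlane Complex Filter MeasureTheory CongruenceSubgroup

noncomputable section

open VVMF

/-! `T_M φ` is `φ ⊗ 1`, and `T_M ρ(γ)` factors as `(1 ⊗ P_γ) · diag_m ρ(I_m(γ⁻¹)⁻¹)`, where `P_γ`
is the matrix of `m ↦ m·γ⁻¹` on `ℂ[Δ_M]`. Part (i) follows because `φ ⊗ 1` commutes with
`1 ⊗ P_γ` and intertwines the diagonal blocks. For (ii) and (iii) one needs that `m ↦ m·γ` is a
bijection of `Δ_M`: if `g m' = m` with `g ∈ SL₂(ℤ)` and `m, m' ∈ Δ_M`, then `g = (1 q; 0 1)`, and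
`0 ≤ b < d` forces `q = 0`. So `P_γ` has row sums `1`, which is (ii), and the diagonal
`Δ_M → Δ_M × Δ_M` intertwines `P_γ` with `P_γ ⊗ P_γ`, which together with the blockwise
identity for `ρ ⊗ σ` is (iii). -/

namespace VVMF

section Delta

variable {M : ℕ}

lemma Delta.unitriangular_of_SL_mul_eq {g : SL(2, ℤ)} {m m' : Delta M}
    (h : (g : GL2ℤ) * m'.1 = m.1) :
    (g : GL2ℤ) 1 0 = 0 ∧ (g : GL2ℤ) 0 0 = 1 ∧ (g : GL2ℤ) 1 1 = 1 := by
  obtain ⟨hc', ha', -⟩ := m'.2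
  have hdet : (g : GL2ℤ) 0 0 * (g : GL2ℤ) 1 1 - (g : GL2ℤ) 0 1 * (g : GL2ℤ) 1 0 = 1 := by
    rw [← Matrix.det_fin_two]; exact g.2
  have e00 := congrFun (congrFun h 0) 0
  have e10 := congrFun (congrFun h 1) 0
  simp only [Matrix.mul_apply, Fin.sum_univ_two, hc', mul_zero, add_zero] at e00 e10
  rw [m.2.1] at e10
  have hg10 : (g : GL2ℤ) 1 0 = 0 := (mul_eq_zero.mp e10).resolve_right ha'.ne'
  have hg00 : 0 < (g : GL2ℤ) 0 0 := pos_of_mul_pos_left (e00 ▸ m.2.2.1) ha'.le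
  rw [hg10, mul_zero, sub_zero] at hdet
  rcases Int.mul_eq_one_iff_eq_one_or_neg_one.mp hdet with h1 | h1 <;> omega

lemma Delta.eq_of_SL_mul_eq {g : SL(2, ℤ)} {m m' : Delta M} (h : (g : GL2ℤ) * m'.1 = m.1) :
    m = m' := by
  obtain ⟨hg10, hg00, hg11⟩ := Delta.unitriangular_of_SL_mul_eq h
  obtain ⟨hc, -, -, hb, hbd⟩ := m.2
  obtain ⟨hc', -, -, hb', hbd'⟩ := m'.2
  have entry : ∀ i j, ((g : GL2ℤ) * m'.1) i j = m.1 i j := fun i j => congrFun (congrFun h i) j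
  have e00 := entry 0 0
  have e01 := entry 0 1
  have e11 := entry 1 1
  simp only [Matrix.mul_apply, Fin.sum_univ_two, hc', hg10, hg00, hg11] at e00 e01 e11
  have hq : (g : GL2ℤ) 0 1 = 0 := by nlinarith
  refine Subtype.ext (Matrix.ext fun i j => ?_)
  fin_cases i <;> fin_cases j
  · simpa using e00.symm
  · simpa [hq] using e01.symm
  · exact hc.trans hc'.symm
  · simpa using e11.symm

variable {bar : Delta M → SL(2, ℤ) → Delta M} {coc : Delta M → SL(2, ℤ) → SL(2, ℤ)}

lemma HeckeData.bar_injective (hd : HeckeData M bar coc) (δ : SL(2, ℤ)) :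
    Function.Injective (bar · δ) := by
  intro m m' h
  have hm : ∀ n : Delta M, n.1 = (coc n δ : GL2ℤ) * (bar n δ).1 * (δ⁻¹ : SL(2, ℤ)) := by
    intro n
    rw [hd n δ, mul_assoc, ← Matrix.SpecialLinearGroup.coe_mul, mul_inv_cancel,
      Matrix.SpecialLinearGroup.coe_one, mul_one]
  refine Delta.eq_of_SL_mul_eq (g := coc m δ * (coc m' δ)⁻¹) ?_
  simp only at h
  rw [hm m, hm m', h, Matrix.SpecialLinearGroup.coe_mul, ← mul_assoc, ← mul_assoc,
    mul_assoc _ (((coc m' δ)⁻¹ : SL(2, ℤ)) : GL2ℤ), ← Matrix.SpecialLinearGroup.coe_mul,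
    inv_mul_cancel, Matrix.SpecialLinearGroup.coe_one, mul_one]

lemma HeckeData.bar_bijective (hd : HeckeData M bar coc) (δ : SL(2, ℤ)) :
    Function.Bijective (bar · δ) :=
  Finite.injective_iff_bijective.mp (hd.bar_injective δ)

end Delta

lemma kronecker_one_mul_one_kronecker {R l m n : Type*} [CommSemiring R] [Fintype l] [Fintype m]
    [Fintype n] [DecidableEq l] [DecidableEq m] [DecidableEq n]
    (A : Matrix l m R) (B : Matrix n n R) :
    A ⊗ₖ (1 : Matrix n n R) * ((1 : Matrix m m R) ⊗ₖ B) =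
      ((1 : Matrix l l R) ⊗ₖ B) * (A ⊗ₖ (1 : Matrix n n R)) := by
  simp only [← mul_kronecker_mul, Matrix.mul_one, Matrix.one_mul]

section Matrices

variable {M : ℕ}

def pushMatrix {o : Type*} (f : o → o) : Matrix o o ℂ :=
  Matrix.of fun m n => if m = f n then 1 else 0

lemma sum_pushMatrix_apply {o : Type*} [Fintype o] {f : o → o} (hf : Function.Bijective f)
    (m : o) : ∑ n, pushMatrix f m n = 1 := by
  simp only [pushMatrix, Matrix.of_apply]
  rw [hf.sum_comp (fun n => if m = n then (1 : ℂ) else 0)]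
  simp

lemma heckeRep_eq_kronecker_mul_blockDiagonal {ι : Type*} [Fintype ι] [DecidableEq ι]
    (ρ : SL(2, ℤ) → Matrix ι ι ℂ) (bar : Delta M → SL(2, ℤ) → Delta M)
    (coc : Delta M → SL(2, ℤ) → SL(2, ℤ)) (γ : SL(2, ℤ)) :
    heckeRep M ρ bar coc γ =
      ((1 : Matrix ι ι ℂ) ⊗ₖ pushMatrix (bar · γ⁻¹)) *
        blockDiagonal (fun m => ρ (coc m γ⁻¹)⁻¹) := by
  ext p q
  simp [heckeRep, pushMatrix, Matrix.mul_apply, Fintype.sum_prod_type, blockDiagonal_apply,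
    Matrix.one_apply]

lemma heckeHom_eq_kronecker_one {ι κ : Type*} (φ : Matrix κ ι ℂ) :
    heckeHom M φ = φ ⊗ₖ (1 : Matrix (Delta M) (Delta M) ℂ) := by
  rw [kronecker_one]; rfl

end Matrices

section Functoriality

variable {M : ℕ} {ι κ : Type*} [Fintype κ]

lemma heckeHom_mul {ν : Type*} (ψ : Matrix ν κ ℂ) (φ : Matrix κ ι ℂ) :
    heckeHom M (ψ * φ) = heckeHom M ψ * heckeHom M φ := by
  simp only [heckeHom_eq_kronecker_one, ← mul_kronecker_mul, one_mul]

lemma heckeHom_mul_heckeRep [Fintype ι] (ρ : SL(2, ℤ) → Matrix ι ι ℂ)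
    (σ : SL(2, ℤ) → Matrix κ κ ℂ) (bar : Delta M → SL(2, ℤ) → Delta M)
    (coc : Delta M → SL(2, ℤ) → SL(2, ℤ))
    {φ : Matrix κ ι ℂ} (hφ : ∀ γ, φ * ρ γ = σ γ * φ) (γ : SL(2, ℤ)) :
    heckeHom M φ * heckeRep M ρ bar coc γ = heckeRep M σ bar coc γ * heckeHom M φ := by
  rw [heckeRep_eq_kronecker_mul_blockDiagonal, heckeRep_eq_kronecker_mul_blockDiagonal,
    heckeHom_eq_kronecker_one, ← Matrix.mul_assoc, kronecker_one_mul_one_kronecker,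
    Matrix.mul_assoc, Matrix.mul_assoc, kronecker_one]
  simp only [← blockDiagonal_mul, hφ]

end Functoriality

section TensorProduct

variable {M : ℕ} {ι κ : Type*}

lemma heckeTenProj_apply (p : (ι × κ) × Delta M) (q : (ι × Delta M) × (κ × Delta M)) :
    heckeTenProj ι κ M p q = if ((p.1.1, p.2), (p.1.2, p.2)) = q then 1 else 0 := by
  obtain ⟨⟨i, k⟩, m⟩ := p
  obtain ⟨⟨i', m₁⟩, ⟨k', m₂⟩⟩ := q
  simp only [heckeTenProj, Prod.mk.injEq]
  congr 1
  grind

variable [Fintype ι] [Fintype κ]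

lemma heckeTenProj_mul_apply {α : Type*} (A : Matrix ((ι × Delta M) × (κ × Delta M)) α ℂ)
    (p : (ι × κ) × Delta M) (a : α) :
    (heckeTenProj ι κ M * A) p a = A ((p.1.1, p.2), (p.1.2, p.2)) a := by
  simp [Matrix.mul_apply, heckeTenProj_apply]

lemma mul_heckeTenProj_apply {α : Type*} (A : Matrix α ((ι × κ) × Delta M) ℂ) (a : α)
    (q : (ι × Delta M) × (κ × Delta M)) :
    (A * heckeTenProj ι κ M) a q = if q.1.2 = q.2.2 then A a ((q.1.1, q.2.1), q.1.2) else 0 := by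
  obtain ⟨⟨i, m₁⟩, ⟨k, m₂⟩⟩ := q
  simp only [Matrix.mul_apply, heckeTenProj_apply, Prod.mk.injEq, mul_ite, mul_one, mul_zero]
  split_ifs with h
  · subst h
    rw [Finset.sum_eq_single ((i, k), m₁)] <;> grind
  · exact Finset.sum_eq_zero fun r _ => if_neg (by grind)

lemma heckeTenProj_mulVec (x : (ι × Delta M) × (κ × Delta M) → ℂ) :
    heckeTenProj ι κ M *ᵥ x = fun p => x ((p.1.1, p.2), (p.1.2, p.2)) := by
  ext p
  simp [Matrix.mulVec, dotProduct, heckeTenProj_apply]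

lemma heckeTenProj_mulVec_surjective :
    Function.Surjective fun x : (ι × Delta M) × (κ × Delta M) → ℂ => heckeTenProj ι κ M *ᵥ x :=
  fun y => ⟨fun q => y ((q.1.1, q.2.1), q.1.2), by simp only [heckeTenProj_mulVec]⟩

lemma heckeTenProj_mul_kronecker_blockDiagonal {ι' κ' : Type*} [Fintype ι'] [Fintype κ']
    (D : Delta M → Matrix ι ι' ℂ) (E : Delta M → Matrix κ κ' ℂ) :
    heckeTenProj ι κ M * (blockDiagonal D ⊗ₖ blockDiagonal E) =
      blockDiagonal (fun m => D m ⊗ₖ E m) * heckeTenProj ι' κ' M := by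
  ext p q
  rw [heckeTenProj_mul_apply, mul_heckeTenProj_apply]
  simp only [kroneckerMap_apply, blockDiagonal_apply]
  split_ifs <;> grind

lemma heckeTenProj_mul_kronecker_pushMatrix {f : Delta M → Delta M} (hf : Function.Injective f) :
    heckeTenProj ι κ M *
        (((1 : Matrix ι ι ℂ) ⊗ₖ pushMatrix f) ⊗ₖ ((1 : Matrix κ κ ℂ) ⊗ₖ pushMatrix f)) =
      ((1 : Matrix (ι × κ) (ι × κ) ℂ) ⊗ₖ pushMatrix f) * heckeTenProj ι κ M := by
  ext p q
  rw [heckeTenProj_mul_apply, mul_heckeTenProj_apply]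
  simp only [kroneckerMap_apply, pushMatrix, Matrix.of_apply, Matrix.one_apply]
  split_ifs <;> grind

end TensorProduct

variable {M : ℕ} {bar : Delta M → SL(2, ℤ) → Delta M} {coc : Delta M → SL(2, ℤ) → SL(2, ℤ)}

lemma oneIncl_mulVec_injective (hM : 0 < M) :
    Function.Injective fun v : Unit → ℂ => oneIncl M *ᵥ v := by
  intro v w h
  funext u
  simpa [Matrix.mulVec, dotProduct, oneIncl] using congrFun h ((), mMat M hM)

lemma heckeRep_oneRep_mul_oneIncl (hd : HeckeData M bar coc) (γ : SL(2, ℤ)) :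
    heckeRep M oneRep bar coc γ * oneIncl M = oneIncl M * oneRep γ := by
  ext p u
  simp only [Matrix.mul_apply, heckeRep, oneRep, oneIncl, Matrix.of_apply, Matrix.one_apply_eq,
    mul_one, Fintype.sum_prod_type, Finset.univ_unique, Finset.sum_singleton]
  exact sum_pushMatrix_apply (hd.bar_bijective γ⁻¹) p.2

lemma heckeTenProj_mul_kronecker_heckeRep {ι κ : Type*} [Fintype ι] [Fintype κ]
    (hd : HeckeData M bar coc) (ρ : SL(2, ℤ) → Matrix ι ι ℂ) (σ : SL(2, ℤ) → Matrix κ κ ℂ)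
    (γ : SL(2, ℤ)) :
    heckeTenProj ι κ M * (heckeRep M ρ bar coc γ ⊗ₖ heckeRep M σ bar coc γ) =
      heckeRep M (fun γ => ρ γ ⊗ₖ σ γ) bar coc γ * heckeTenProj ι κ M := by
  simp only [heckeRep_eq_kronecker_mul_blockDiagonal, mul_kronecker_mul, ← Matrix.mul_assoc,
    heckeTenProj_mul_kronecker_pushMatrix (hd.bar_injective γ⁻¹)]
  rw [Matrix.mul_assoc, heckeTenProj_mul_kronecker_blockDiagonal, Matrix.mul_assoc]

end VVMF

theorem hecke_operator_on_representations_general {ι κ ν : Type*} [Fintype ι] [Fintype κ]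
    (M : ℕ) (hM : 0 < M)
    (ρ : SL(2, ℤ) → Matrix ι ι ℂ) (σ : SL(2, ℤ) → Matrix κ κ ℂ)
    (bar : Delta M → SL(2, ℤ) → Delta M) (coc : Delta M → SL(2, ℤ) → SL(2, ℤ))
    (hd : HeckeData M bar coc) :
    -- (i) `T_M φ` intertwines `T_M ρ` and `T_M σ`, and `T_M (ψ ∘ φ) = (T_M ψ) ∘ (T_M φ)`
    (∀ φ : Matrix κ ι ℂ, (∀ γ, φ * ρ γ = σ γ * φ) →
      ∀ γ, heckeHom M φ * heckeRep M ρ bar coc γ = heckeRep M σ bar coc γ * heckeHom M φ) ∧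
    (∀ (φ : Matrix κ ι ℂ) (ψ : Matrix ν κ ℂ),
      heckeHom M (ψ * φ) = heckeHom M ψ * heckeHom M φ) ∧
    -- (ii) `𝟙 ↪ T_M 𝟙`
    (Function.Injective (fun v : Unit → ℂ => (oneIncl M).mulVec v) ∧
      ∀ γ : SL(2, ℤ),
        heckeRep M oneRep bar coc γ * oneIncl M = oneIncl M * oneRep γ) ∧
    -- (iii) `(T_M ρ) ⊗ (T_M σ) ↠ T_M (ρ ⊗ σ)`
    (Function.Surjective
      (fun x : (ι × Delta M) × (κ × Delta M) → ℂ => (heckeTenProj ι κ M).mulVec x) ∧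
      ∀ γ : SL(2, ℤ),
        heckeTenProj ι κ M * (heckeRep M ρ bar coc γ ⊗ₖ heckeRep M σ bar coc γ) =
          heckeRep M (fun γ => ρ γ ⊗ₖ σ γ) bar coc γ * heckeTenProj ι κ M) :=
  ⟨fun _ hφ => heckeHom_mul_heckeRep ρ σ bar coc hφ, fun φ ψ => heckeHom_mul ψ φ,
    ⟨oneIncl_mulVec_injective hM, heckeRep_oneRep_mul_oneIncl hd⟩,
    ⟨heckeTenProj_mulVec_surjective, heckeTenProj_mul_kronecker_heckeRep hd ρ σ⟩⟩

/-- (i) `T_M φ` is a homomorphism of `SL₂(ℤ)`-representations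
`T_M ρ → T_M σ` for every homomorphism `φ : ρ → σ`, functorially in `φ`;
(ii) `𝟙 → T_M 𝟙`, `c ↦ c ∑_m 𝔢_m`, is an injective homomorphism;
(iii) `(T_M ρ) ⊗ (T_M σ) → T_M (ρ ⊗ σ)` is a surjective homomorphism. -/
theorem hecke_operator_on_representations {ι κ ν : Type*} [Fintype ι] [Fintype κ] [Fintype ν]
    (M : ℕ) (hM : 0 < M)
    (ρ : SL(2, ℤ) → Matrix ι ι ℂ) (σ : SL(2, ℤ) → Matrix κ κ ℂ)
    (ϖ : SL(2, ℤ) → Matrix ν ν ℂ)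
    (hρ : IsRep ρ) (hσ : IsRep σ) (hϖ : IsRep ϖ)
    (bar : Delta M → SL(2, ℤ) → Delta M) (coc : Delta M → SL(2, ℤ) → SL(2, ℤ))
    (hd : HeckeData M bar coc) :
    -- (i) `T_M φ` intertwines `T_M ρ` and `T_M σ`, and `T_M (ψ ∘ φ) = (T_M ψ) ∘ (T_M φ)`
    (∀ φ : Matrix κ ι ℂ, (∀ γ, φ * ρ γ = σ γ * φ) →
      ∀ γ, heckeHom M φ * heckeRep M ρ bar coc γ = heckeRep M σ bar coc γ * heckeHom M φ) ∧
    (∀ (φ : Matrix κ ι ℂ) (ψ : Matrix ν κ ℂ),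
      heckeHom M (ψ * φ) = heckeHom M ψ * heckeHom M φ) ∧
    -- (ii) `𝟙 ↪ T_M 𝟙`
    (Function.Injective (fun v : Unit → ℂ => (oneIncl M).mulVec v) ∧
      ∀ γ : SL(2, ℤ),
        heckeRep M oneRep bar coc γ * oneIncl M = oneIncl M * oneRep γ) ∧
    -- (iii) `(T_M ρ) ⊗ (T_M σ) ↠ T_M (ρ ⊗ σ)`
    (Function.Surjective
      (fun x : (ι × Delta M) × (κ × Delta M) → ℂ => (heckeTenProj ι κ M).mulVec x) ∧
      ∀ γ : SL(2, ℤ),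
        heckeTenProj ι κ M * (heckeRep M ρ bar coc γ ⊗ₖ heckeRep M σ bar coc γ) =
          heckeRep M (fun γ => ρ γ ⊗ₖ σ γ) bar coc γ * heckeTenProj ι κ M) :=
  hecke_operator_on_representations_general M hM ρ σ bar coc hd
end
end

section
/- Let ρ be a finite-dimensional complex representation of SL₂(ℤ) with finite index kernel, M a positive integer, and k ∈ ℤ. If f ∈ M_k(ρ), then T_M f := Σ_{m∈Δ_M} (f|_k m) ⊗ 𝔢_m is a modular form of weight k and type T_M ρ, i.e. T_M f ∈ M_k(T_M ρ). -/
open scoped MatrixGroups Manifold Kronecker ComplexConjugate Classical ComplexOrder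
open Matrix UpperHalfPlane Complex Filter MeasureTheory CongruenceSubgroup

noncomputable section

open VVMF

/-! Write `m γ = I_m(γ) · overline(m γ)`. Uniqueness of the Hermite normal form makes
`m ↦ overline(m γ)` a permutation of `Δ_M`, so the `overline(m γ)`-block of `(T_M f) ∣ γ` is
`(c τ + d)^{-k} ρ(I_m(γ))⁻¹ (f ∣_k m)(γ τ)`. Applying both sides of `m γ = I_m(γ) · overline(m γ)`
to the vector `(τ, 1)` gives `m (γ τ) = I_m(γ) (overline(m γ) τ)` together with the relation
between the automorphy factors, and the `ρ`-invariance of `f` under `I_m(γ)` turns this block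
into `(f ∣_k overline(m γ))(τ)`. Holomorphy and boundedness at `i∞` hold blockwise, since
`τ ↦ (a τ + b)/d` is holomorphic and pushes `i∞` to `i∞`. -/

namespace VVMF

section UpperTriangular

variable {m : GL2ℤ}

lemma im_affine (τ : ℍ) :
    ((((m 0 0 : ℤ) : ℂ) * τ + ((m 0 1 : ℤ) : ℂ)) / ((m 1 1 : ℤ) : ℂ)).im
      = (m 0 0 / m 1 1 : ℝ) * τ.im := by
  have hd : ((m 1 1 : ℤ) : ℂ) = (((m 1 1 : ℤ) : ℝ) : ℂ) := by push_cast; rfl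
  rw [hd, Complex.div_ofReal_im]
  simp only [add_im, mul_im, intCast_re, coe_im, intCast_im, coe_re]
  ring

lemma im_affine_pos (ha : 0 < m 0 0) (hd : 0 < m 1 1) (τ : ℍ) :
    0 < ((((m 0 0 : ℤ) : ℂ) * τ + ((m 0 1 : ℤ) : ℂ)) / ((m 1 1 : ℤ) : ℂ)).im := by
  have : (0 : ℝ) < m 0 0 := by exact_mod_cast ha
  have : (0 : ℝ) < m 1 1 := by exact_mod_cast hd
  rw [im_affine]
  exact mul_pos (by positivity) τ.im_pos

lemma coe_utAct (ha : 0 < m 0 0) (hd : 0 < m 1 1) (τ : ℍ) :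
    (utAct m τ : ℂ) = (((m 0 0 : ℤ) : ℂ) * τ + ((m 0 1 : ℤ) : ℂ)) / ((m 1 1 : ℤ) : ℂ) := by
  rw [utAct, dif_pos (im_affine_pos ha hd τ)]

lemma utAct_im (ha : 0 < m 0 0) (hd : 0 < m 1 1) (τ : ℍ) :
    (utAct m τ).im = (m 0 0 / m 1 1 : ℝ) * τ.im := by
  rw [UpperHalfPlane.im, coe_utAct ha hd, im_affine]

lemma tendsto_utAct_atImInfty (ha : 0 < m 0 0) (hd : 0 < m 1 1) :
    Tendsto (utAct m) atImInfty atImInfty := by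
  have : (0 : ℝ) < m 0 0 := by exact_mod_cast ha
  have : (0 : ℝ) < m 1 1 := by exact_mod_cast hd
  refine tendsto_comap_iff.mpr ?_
  simp only [Function.comp_def, utAct_im ha hd]
  exact tendsto_comap.const_mul_atTop (by positivity)

lemma mdifferentiable_comp_utAct (ha : 0 < m 0 0) (hd : 0 < m 1 1) {g : ℍ → ℂ}
    (hg : MDifferentiable 𝓘(ℂ) 𝓘(ℂ) g) :
    MDifferentiable 𝓘(ℂ) 𝓘(ℂ) (g ∘ utAct m) := by
  rw [mdifferentiable_iff] at hg ⊢
  let A : ℂ → ℂ := fun w => (((m 0 0 : ℤ) : ℂ) * w + ((m 0 1 : ℤ) : ℂ)) / ((m 1 1 : ℤ) : ℂ)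
  have hA : Set.MapsTo A {z | 0 < z.im} {z | 0 < z.im} := fun w hw =>
    im_affine_pos ha hd ⟨w, hw⟩
  refine (hg.comp (by fun_prop : Differentiable ℂ A).differentiableOn hA).congr ?_
  intro w hw
  simp only [Function.comp_apply, ofComplex_apply_of_im_pos hw]
  rw [ofComplex_apply_of_im_pos (hA hw)]
  exact congrArg g (UpperHalfPlane.ext (coe_utAct ha hd _))

variable {ι : Type*} {k : ℤ} {f : ℍ → ι → ℂ} {i : ι}

lemma mdifferentiable_mslash (ha : 0 < m 0 0) (hd : 0 < m 1 1)
    (hf : MDifferentiable 𝓘(ℂ) 𝓘(ℂ) (fun τ => f τ i)) :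
    MDifferentiable 𝓘(ℂ) 𝓘(ℂ) (fun τ => mslash k m f τ i) :=
  (mdifferentiable_comp_utAct ha hd hf).const_smul
    (((((m 0 0 : ℤ) : ℝ) / ((m 1 1 : ℤ) : ℝ)) ^ ((k : ℝ) / 2) : ℝ) : ℂ)

lemma isBoundedAtImInfty_mslash (ha : 0 < m 0 0) (hd : 0 < m 1 1)
    (hf : IsBoundedAtImInfty (fun τ => f τ i)) :
    IsBoundedAtImInfty (fun τ => mslash k m f τ i) :=
  BoundedAtFilter.smul (((((m 0 0 : ℤ) : ℝ) / ((m 1 1 : ℤ) : ℝ)) ^ ((k : ℝ) / 2) : ℝ) : ℂ)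
    (hf.comp_tendsto (tendsto_utAct_atImInfty ha hd))

end UpperTriangular

namespace Delta

variable {M : ℕ}

lemma a_pos (m : Delta M) : 0 < m.1 0 0 := m.2.2.1

lemma d_pos (m : Delta M) : 0 < m.1 1 1 := by
  obtain ⟨-, -, -, hb, hbd⟩ := m.2
  omega

lemma eq_of_mul_eq (u : SL(2, ℤ)) {m m' : Delta M} (h : (u : GL2ℤ) * m.1 = m'.1) :
    m = m' := by
  obtain ⟨hc, ha, -, hb, hbd⟩ := m.2
  obtain ⟨hc', ha', -, hb', hbd'⟩ := m'.2
  have hu := u.2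
  rw [Matrix.det_fin_two] at hu
  have e : ∀ i j, u i 0 * m.1 0 j + u i 1 * m.1 1 j = m'.1 i j := fun i j => by
    simpa [Matrix.mul_apply, Fin.sum_univ_two] using congrFun (congrFun h i) j
  have e00 := e 0 0; have e01 := e 0 1; have e10 := e 1 0; have e11 := e 1 1
  simp only [hc, hc', mul_zero, add_zero] at e00 e10
  have hu10 : u 1 0 = 0 := by
    rcases mul_eq_zero.mp e10 with h | h <;> [exact h; omega]
  obtain ⟨hu00, hu11⟩ : u 0 0 = 1 ∧ u 1 1 = 1 := by
    rw [hu10, mul_zero, sub_zero] at hu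
    have : 0 < u 0 0 := pos_of_mul_pos_left (e00 ▸ ha') ha.le
    rcases Int.mul_eq_one_iff_eq_one_or_neg_one.mp hu with h | h <;> [exact h; omega]
  have hu01 : u 0 1 = 0 := by
    have : u 0 1 * m.1 1 1 = m'.1 0 1 - m.1 0 1 := by rw [hu00] at e01; linarith
    rcases lt_trichotomy (u 0 1) 0 with h | h | h
    · nlinarith
    · exact h
    · nlinarith
  simp only [hu00, hu01, hu10, hu11, one_mul, zero_mul, add_zero, zero_add] at e00 e01 e11
  apply Subtype.ext
  ext i j
  fin_cases i <;> fin_cases j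
  exacts [e00, e01, hc.trans hc'.symm, e11]

lemma div_rpow_eq (m : Delta M) (k : ℤ) :
    ((m.1 0 0 : ℝ) / m.1 1 1) ^ ((k : ℝ) / 2)
      = (M : ℝ) ^ ((k : ℝ) / 2) * (m.1 1 1 : ℝ) ^ (-k) := by
  have hd : (0 : ℝ) < m.1 1 1 := by exact_mod_cast m.d_pos
  have ha : (m.1 0 0 : ℝ) = M / m.1 1 1 := by
    rw [eq_div_iff hd.ne']
    exact_mod_cast m.2.2.2.1
  rw [ha, div_div, ← sq, Real.div_rpow (Nat.cast_nonneg M) (sq_nonneg _),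
    ← Real.rpow_natCast_mul hd.le, Nat.cast_ofNat, mul_div_cancel₀ _ two_ne_zero,
    Real.rpow_intCast, _root_.zpow_neg, div_eq_mul_inv]

end Delta

lemma SL_coe_inv_mul (g : SL(2, ℤ)) : ((g⁻¹ : SL(2, ℤ)) : GL2ℤ) * g = 1 := by
  rw [← Matrix.SpecialLinearGroup.coe_mul, inv_mul_cancel, Matrix.SpecialLinearGroup.coe_one]

lemma SL_coe_mul_inv (g : SL(2, ℤ)) : (g : GL2ℤ) * ((g⁻¹ : SL(2, ℤ)) : GL2ℤ) = 1 := by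
  rw [← Matrix.SpecialLinearGroup.coe_mul, mul_inv_cancel, Matrix.SpecialLinearGroup.coe_one]

lemma denomZ_ne_zero (γ : SL(2, ℤ)) (τ : ℍ) : denomZ γ τ ≠ 0 := by
  have : denomZ γ τ = UpperHalfPlane.denom γ τ := by rw [ModularGroup.denom_apply]; rfl
  exact this ▸ UpperHalfPlane.denom_ne_zero _ τ

lemma coe_SL_smul (γ : SL(2, ℤ)) (τ : ℍ) :
    ((γ • τ : ℍ) : ℂ) = (((γ 0 0 : ℤ) : ℂ) * τ + ((γ 0 1 : ℤ) : ℂ)) / denomZ γ τ := by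
  rw [coe_specialLinearGroup_apply, denomZ]
  simp

lemma vslash_invariant_apply {ι : Type*} [Fintype ι] {k : ℤ} {ρ : SL(2, ℤ) → Matrix ι ι ℂ}
    {f : ℍ → ι → ℂ} (hf : ∀ γ, vslash k ρ γ f = f) (γ : SL(2, ℤ)) (τ : ℍ) :
    ρ γ⁻¹ *ᵥ f (γ • τ) = denomZ γ τ ^ k • f τ := by
  conv_rhs => rw [← hf γ]
  rw [vslash, smul_smul, ← zpow_add₀ (denomZ_ne_zero γ τ), add_neg_cancel, zpow_zero, one_smul]

lemma SL_map_mulVec (γ : SL(2, ℤ)) (τ : ℍ) :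
    (γ : GL2ℤ).map (Int.castRingHom ℂ) *ᵥ ![(τ : ℂ), 1]
      = denomZ γ τ • ![((γ • τ : ℍ) : ℂ), 1] := by
  ext i
  fin_cases i
  · rw [coe_SL_smul]
    simp [Matrix.mulVec, dotProduct, Fin.sum_univ_two, mul_div_cancel₀ _ (denomZ_ne_zero γ τ)]
  · simp [Matrix.mulVec, dotProduct, Fin.sum_univ_two, denomZ]

lemma Delta.map_mulVec {M : ℕ} (m : Delta M) (τ : ℍ) :
    m.1.map (Int.castRingHom ℂ) *ᵥ ![(τ : ℂ), 1]
      = ((m.1 1 1 : ℤ) : ℂ) • ![((utAct m.1 τ : ℍ) : ℂ), 1] := by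
  have hd : ((m.1 1 1 : ℤ) : ℂ) ≠ 0 := by exact_mod_cast m.d_pos.ne'
  ext i
  fin_cases i
  · rw [coe_utAct m.a_pos m.d_pos]
    simp [Matrix.mulVec, dotProduct, Fin.sum_univ_two, mul_div_cancel₀ _ hd]
  · simp [Matrix.mulVec, dotProduct, Fin.sum_univ_two, m.2.1]

lemma eq_of_smul_vecCons_eq {c c' x x' : ℂ} (hc : c ≠ 0) (h : c • ![x, 1] = c' • ![x', 1]) :
    c = c' ∧ x = x' := by
  have h0 := congrFun h 0
  have h1 := congrFun h 1
  simp only [Pi.smul_apply, Matrix.cons_val_zero, Matrix.cons_val_one, smul_eq_mul,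
    mul_one] at h0 h1
  subst h1
  exact ⟨rfl, mul_left_cancel₀ hc h0⟩

namespace HeckeData

variable {M : ℕ} {bar : Delta M → SL(2, ℤ) → Delta M} {coc : Delta M → SL(2, ℤ) → SL(2, ℤ)}

lemma val_eq (hd : HeckeData M bar coc) (m : Delta M) (γ : SL(2, ℤ)) :
    m.1 = (coc m γ : GL2ℤ) * (bar m γ).1 * ((γ⁻¹ : SL(2, ℤ)) : GL2ℤ) := by
  rw [hd m γ, mul_assoc, SL_coe_mul_inv, mul_one]

lemma bar_injective_s6 (hd : HeckeData M bar coc) (γ : SL(2, ℤ)) : Function.Injective (bar · γ) := by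
  intro m m' (h : bar m γ = bar m' γ)
  apply Delta.eq_of_mul_eq (coc m' γ * (coc m γ)⁻¹)
  rw [hd.val_eq m γ, hd.val_eq m' γ, h, Matrix.SpecialLinearGroup.coe_mul]
  simp only [← mul_assoc]
  rw [mul_assoc (coc m' γ : GL2ℤ), SL_coe_inv_mul, mul_one]

lemma bar_surjective (hd : HeckeData M bar coc) (γ : SL(2, ℤ)) : Function.Surjective (bar · γ) :=
  Finite.injective_iff_surjective.mp (hd.bar_injective_s6 γ)

lemma smul_vecCons_eq (hd : HeckeData M bar coc) (m : Delta M) (γ : SL(2, ℤ)) (τ : ℍ) :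
    (denomZ γ τ * ((m.1 1 1 : ℤ) : ℂ)) • ![((utAct m.1 (γ • τ) : ℍ) : ℂ), 1]
      = ((((bar m γ).1 1 1 : ℤ) : ℂ) * denomZ (coc m γ) (utAct (bar m γ).1 τ)) •
          ![((coc m γ • utAct (bar m γ).1 τ : ℍ) : ℂ), 1] := by
  have h := congrArg (fun A : GL2ℤ => A.map (Int.castRingHom ℂ) *ᵥ ![(τ : ℂ), 1]) (hd m γ)
  simp only [Matrix.map_mul, ← Matrix.mulVec_mulVec, SL_map_mulVec, Delta.map_mulVec,
    Matrix.mulVec_smul, smul_smul] at h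
  exact h.symm

lemma utAct_SL_smul (hd : HeckeData M bar coc) (m : Delta M) (γ : SL(2, ℤ)) (τ : ℍ) :
    utAct m.1 (γ • τ) = coc m γ • utAct (bar m γ).1 τ := by
  have hc : denomZ γ τ * ((m.1 1 1 : ℤ) : ℂ) ≠ 0 :=
    mul_ne_zero (denomZ_ne_zero γ τ) (by exact_mod_cast m.d_pos.ne')
  exact UpperHalfPlane.ext (eq_of_smul_vecCons_eq hc (hd.smul_vecCons_eq m γ τ)).2

lemma d_mul_denomZ (hd : HeckeData M bar coc) (m : Delta M) (γ : SL(2, ℤ)) (τ : ℍ) :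
    (((bar m γ).1 1 1 : ℤ) : ℂ) * denomZ (coc m γ) (utAct (bar m γ).1 τ)
      = denomZ γ τ * ((m.1 1 1 : ℤ) : ℂ) := by
  have hc : denomZ γ τ * ((m.1 1 1 : ℤ) : ℂ) ≠ 0 :=
    mul_ne_zero (denomZ_ne_zero γ τ) (by exact_mod_cast m.d_pos.ne')
  exact (eq_of_smul_vecCons_eq hc (hd.smul_vecCons_eq m γ τ)).1.symm

variable {ι : Type*} [Fintype ι] {k : ℤ} {ρ : SL(2, ℤ) → Matrix ι ι ℂ} {f : ℍ → ι → ℂ}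

lemma vslash_mslash (hd : HeckeData M bar coc) (hf : ∀ γ, vslash k ρ γ f = f) (m : Delta M)
    (γ : SL(2, ℤ)) (τ : ℍ) :
    denomZ γ τ ^ (-k) • (ρ (coc m γ)⁻¹ *ᵥ mslash k m.1 f (γ • τ))
      = mslash k (bar m γ).1 f τ := by
  have hγ := denomZ_ne_zero γ τ
  have hm : ((m.1 1 1 : ℤ) : ℂ) ≠ 0 := by exact_mod_cast m.d_pos.ne'
  have hbar : (((bar m γ).1 1 1 : ℤ) : ℂ) ≠ 0 := by exact_mod_cast (bar m γ).d_pos.ne'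
  have hden : denomZ (coc m γ) (utAct (bar m γ).1 τ)
      = denomZ γ τ * ((m.1 1 1 : ℤ) : ℂ) / (((bar m γ).1 1 1 : ℤ) : ℂ) :=
    eq_div_of_mul_eq hbar (by rw [mul_comm]; exact hd.d_mul_denomZ m γ τ)
  simp only [mslash, Matrix.mulVec_smul, hd.utAct_SL_smul, vslash_invariant_apply hf, smul_smul]
  congr 1
  rw [m.div_rpow_eq, (bar m γ).div_rpow_eq, hden]
  push_cast
  simp only [_root_.zpow_neg, div_zpow, mul_zpow]
  field_simp

lemma heckeRep_inv_mulVec_apply (hd : HeckeData M bar coc) (γ : SL(2, ℤ)) (v : ι × Delta M → ℂ)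
    (i : ι) (m : Delta M) :
    (heckeRep M ρ bar coc γ⁻¹ *ᵥ v) (i, bar m γ) = (ρ (coc m γ)⁻¹ *ᵥ fun j => v (j, m)) i := by
  simp only [Matrix.mulVec, dotProduct, heckeRep, inv_inv, (hd.bar_injective_s6 γ).eq_iff,
    ite_mul, zero_mul]
  rw [Fintype.sum_prod_type_right]
  simp

lemma vslash_heckeT (hd : HeckeData M bar coc) (hf : ∀ γ, vslash k ρ γ f = f) (γ : SL(2, ℤ)) :
    vslash k (heckeRep M ρ bar coc) γ (heckeT M k f) = heckeT M k f := by
  funext τ ⟨i, n⟩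
  obtain ⟨m, rfl⟩ := hd.bar_surjective γ n
  rw [vslash, Pi.smul_apply, hd.heckeRep_inv_mulVec_apply]
  exact congrFun (hd.vslash_mslash hf m γ τ) i

end HeckeData

end VVMF

theorem heckeT_is_modular_form_general {ι : Type*} [Fintype ι] (M : ℕ) (k : ℤ)
    (ρ : SL(2, ℤ) → Matrix ι ι ℂ)
    (bar : Delta M → SL(2, ℤ) → Delta M) (coc : Delta M → SL(2, ℤ) → SL(2, ℤ))
    (hd : HeckeData M bar coc)
    (f : ℍ → ι → ℂ) (hf : IsVModForm k ρ f) :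
    IsVModForm k (heckeRep M ρ bar coc) (heckeT M k f) := by
  obtain ⟨hdiff, hinv, hbdd⟩ := hf
  exact ⟨fun p => mdifferentiable_mslash p.2.a_pos p.2.d_pos (hdiff p.1),
    hd.vslash_heckeT hinv,
    fun p => isBoundedAtImInfty_mslash p.2.a_pos p.2.d_pos (hbdd p.1)⟩

/-- If `f ∈ M_k(ρ)`, then `T_M f = ∑_{m ∈ Δ_M} (f ∣_k m) ⊗ 𝔢_m` is a
modular form of weight `k` and type `T_M ρ`. -/
theorem heckeT_is_modular_form {ι : Type*} [Fintype ι] (M : ℕ) (hM : 0 < M) (k : ℤ)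
    (ρ : SL(2, ℤ) → Matrix ι ι ℂ) (hρ : IsRep ρ)
    (hfin : (repKer ρ hρ).FiniteIndex)
    (bar : Delta M → SL(2, ℤ) → Delta M) (coc : Delta M → SL(2, ℤ) → SL(2, ℤ))
    (hd : HeckeData M bar coc)
    (f : ℍ → ι → ℂ) (hf : IsVModForm k ρ f) :
    IsVModForm k (heckeRep M ρ bar coc) (heckeT M k f) :=
  heckeT_is_modular_form_general M k ρ bar coc hd f hf
end
end
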